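/- arXiv:0810.1206 — 4 statements merged into one kernel-verified Lean document; each statement's English description precedes it below -/
import Mathlib

section
/- Let q, p, α ∈ [1,∞] with p < α. Then (L^q,L^p)^α(G) = {O}, where O is the class of functions equal to 0 λ-almost everywhere; that is, every measurable f with ‖f‖_{q,p,α} < ∞ vanishes λ-a.e. -/
/-!
If `f` is not a.e. zero, there are `c > 0` and a set `A ⊆ B(e, R)` of positive measure on which
`|f| ≥ c`. For `r ≤ 1`, the blocks `E ∈ π_r` meeting `A` in positive measure lie in the fixed ball
`B(e, γ(R + 2γ))` and have measure comparable to `v = λ(B(e,r))`, so there are `≲ 1/v` of them.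
On such a block `‖f χ_E‖_q ≥ c λ(A ∩ E)^{1/q} ≥ c λ(A ∩ E) v^{1/q - 1}`, and the power-mean
inequality over these blocks gives `‖f‖^{π_r}_{q,p} ≳ v^{1/q - 1/p}`. Hence the `r`-th term of
`‖f‖_{q,p,α}` is `≳ v^{1/α - 1/p}`, which blows up as `r → 0` because `p < α`.
-/

open MeasureTheory ENNReal NNReal Set Filter Topology Pointwise

variable {G : Type*} [Group G] [TopologicalSpace G] [IsTopologicalGroup G]
  [T2Space G] [LocallyCompactSpace G] [SigmaCompactSpace G]
  [MeasurableSpace G] [BorelSpace G]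

/-- The norm `_B‖f‖_{q,p}`. -/
noncomputable def blockNorm {E : Type*} [NormedAddCommGroup E]
    (μ : Measure G) (q p : ℝ≥0∞) (B : Set G) (f : G → E) : ℝ≥0∞ :=
  if p = ∞ then essSup (fun y => eLpNorm ((y • B).indicator f) q μ) μ
  else (∫⁻ y, eLpNorm ((y • B).indicator f) q μ ^ p.toReal ∂μ) ^ (1 / p.toReal)

/-- The norm `‖f‖^π_{q,p}` associated to a partition `π`. -/
noncomputable def partNorm {E : Type*} [NormedAddCommGroup E]
    (μ : Measure G) (q p : ℝ≥0∞) (π : Set (Set G)) (f : G → E) : ℝ≥0∞ :=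
  if p = ∞ then ⨆ A ∈ π, eLpNorm (A.indicator f) q μ
  else (∑' A : π, eLpNorm ((A : Set G).indicator f) q μ ^ p.toReal) ^ (1 / p.toReal)

/-- `π` is a `U`–`V` uniform partition of `G`. -/
def IsUniformPartition (π : Set (Set G)) (U V : Set G) : Prop :=
  π.Countable ∧ (∀ A ∈ π, MeasurableSet A) ∧ π.PairwiseDisjoint id ∧
    ⋃₀ π = univ ∧ ∀ A ∈ π, ∃ x ∈ A, x • U ⊆ A ∧ A ⊆ x • V

/-- The ball `B(x,r)` for the homogeneous norm `nm`. -/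
def gball (nm : G → ℝ) (x : G) (r : ℝ) : Set G := {y | nm (x⁻¹ * y) < r}

/-- The norm `‖f‖_{q,p,α}`. -/
noncomputable def alphaNorm {E : Type*} [NormedAddCommGroup E]
    (μ : Measure G) (nm : G → ℝ) (πr : ℝ → Set (Set G))
    (q p α : ℝ≥0∞) (f : G → E) : ℝ≥0∞ :=
  ⨆ (r : ℝ) (_ : 0 < r),
    μ (gball nm 1 r) ^ (α⁻¹.toReal - q⁻¹.toReal) * partNorm μ q p (πr r) f

/-- The decreasing rearrangement `f*`. -/
noncomputable def rearr (μ : Measure G) (f : G → ℂ) (t : ℝ≥0∞) : ℝ≥0∞ :=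
  sInf {s : ℝ≥0∞ | 0 < s ∧ μ {x | s < (‖f x‖₊ : ℝ≥0∞)} ≤ t}

/-- The weak Lorentz quasinorm `‖f‖*_{α,∞}`. -/
noncomputable def weakNorm (μ : Measure G) (α : ℝ≥0∞) (f : G → ℂ) : ℝ≥0∞ :=
  ⨆ (t : ℝ≥0∞) (_ : 0 < t) (_ : t ≠ ∞), t ^ α⁻¹.toReal * rearr μ f t

lemma ENNReal.one_le_toReal_of_one_le {p : ℝ≥0∞} (hp1 : 1 ≤ p) (hp : p ≠ ∞) : 1 ≤ p.toReal := by
  simpa using ENNReal.toReal_mono hp hp1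

lemma ENNReal.toReal_inv_le_one_of_one_le {q : ℝ≥0∞} (hq : 1 ≤ q) : q⁻¹.toReal ≤ 1 :=
  ENNReal.toReal_le_of_le_ofReal zero_le_one (by simpa using ENNReal.inv_le_one.2 hq)

lemma ENNReal.toReal_inv_mul_toReal_lt_one {p α : ℝ≥0∞} (hp0 : p ≠ 0) (hpα : p < α) :
    α⁻¹.toReal * p.toReal < 1 := by
  have hp_pos : 0 < p.toReal := ENNReal.toReal_pos hp0 hpα.ne_top
  have h := ENNReal.toReal_strict_mono (ENNReal.inv_ne_top.2 hp0) (ENNReal.inv_lt_inv.2 hpα)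
  rw [ENNReal.toReal_inv p] at h
  calc α⁻¹.toReal * p.toReal < p.toReal⁻¹ * p.toReal := mul_lt_mul_of_pos_right h hp_pos
    _ = 1 := inv_mul_cancel₀ hp_pos.ne'

section HomogeneousNorm

variable {G : Type*} [Group G] {nm : G → ℝ} {γ : ℝ}

lemma mem_gball_one {y : G} {r : ℝ} : y ∈ gball nm 1 r ↔ nm y < r := by
  simp [gball]

lemma gball_eq_smul (x : G) (r : ℝ) : gball nm x r = x • gball nm 1 r := by
  ext y
  simp [gball, mem_smul_set_iff_inv_smul_mem]

lemma gball_mono {x : G} {r s : ℝ} (h : r ≤ s) : gball nm x r ⊆ gball nm x s :=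
  fun _ hy => hy.trans_le h

lemma measurableSet_gball_one [MeasurableSpace G] (hnm : Measurable nm) (r : ℝ) :
    MeasurableSet (gball nm 1 r) := by
  simpa [gball] using measurableSet_lt hnm measurable_const

lemma gball_mul_gball_subset (hγ : 0 < γ) (hnm_mul : ∀ x y : G, nm (x * y) ≤ γ * (nm x + nm y))
    (s : ℝ) : gball nm 1 s * gball nm 1 s ⊆ gball nm 1 (2 * γ * s) := by
  rintro _ ⟨u, hu, v, hv, rfl⟩
  rw [mem_gball_one] at hu hv ⊢
  calc nm (u * v) ≤ γ * (nm u + nm v) := hnm_mul u v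
    _ < γ * (s + s) := by gcongr
    _ = 2 * γ * s := by ring

lemma gball_subset_gball_one (hγ : 0 < γ) (hnm_inv : ∀ x : G, nm x⁻¹ = nm x)
    (hnm_mul : ∀ x y : G, nm (x * y) ≤ γ * (nm x + nm y)) {x k : G} {s R : ℝ}
    (hkx : k ∈ gball nm x s) (hk : nm k < R) : gball nm x s ⊆ gball nm 1 (γ * (R + 2 * γ * s)) := by
  intro y (hyx : nm (x⁻¹ * y) < s)
  replace hkx : nm (x⁻¹ * k) < s := hkx
  have hky : nm (k⁻¹ * y) < 2 * γ * s :=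
    calc nm (k⁻¹ * y) = nm ((x⁻¹ * k)⁻¹ * (x⁻¹ * y)) := by group
      _ ≤ γ * (nm (x⁻¹ * k) + nm (x⁻¹ * y)) := hnm_inv (x⁻¹ * k) ▸ hnm_mul _ _
      _ < γ * (s + s) := by gcongr
      _ = 2 * γ * s := by ring
  rw [mem_gball_one]
  calc nm y = nm (k * (k⁻¹ * y)) := by group
    _ ≤ γ * (nm k + nm (k⁻¹ * y)) := hnm_mul _ _
    _ < γ * (R + 2 * γ * s) := by gcongr

end HomogeneousNorm

section

variable {α : Type*} [MeasurableSpace α] {μ : Measure α}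

lemma exists_finset_card_mul_le_measure {S : Set (Set α)} {K : Set α} {u : ℝ≥0∞}
    (hS_disj : S.PairwiseDisjoint id) (hS_meas : ∀ E ∈ S, MeasurableSet E)
    (hS_sub : ∀ E ∈ S, E ⊆ K) (hu_le : ∀ E ∈ S, u ≤ μ E) (hu : u ≠ 0) (hK : μ K ≠ ∞) :
    ∃ P : Finset (Set α), ↑P = S ∧ (P.card : ℝ≥0∞) * u ≤ μ K := by
  have hcard : ∀ P : Finset (Set α), ↑P ⊆ S → (P.card : ℝ≥0∞) * u ≤ μ K := by
    intro P hP
    calc (P.card : ℝ≥0∞) * u = ∑ _E ∈ P, u := by rw [Finset.sum_const, nsmul_eq_mul]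
      _ ≤ ∑ E ∈ P, μ E := Finset.sum_le_sum fun E hE => hu_le E (hP hE)
      _ = μ (⋃ E ∈ P, E) :=
        (measure_biUnion_finset (hS_disj.subset hP) fun E hE => hS_meas E (hP hE)).symm
      _ ≤ μ K := measure_mono (iUnion₂_subset fun E hE => hS_sub E (hP hE))
  have hS_fin : S.Finite := by
    by_contra hS_inf
    obtain ⟨n, hn⟩ := ENNReal.exists_nat_mul_gt hu hK
    obtain ⟨P, hP, rfl⟩ := Set.Infinite.exists_subset_card_eq hS_inf n
    exact (hcard P hP).not_gt hn
  exact ⟨hS_fin.toFinset, hS_fin.coe_toFinset, hcard _ hS_fin.coe_toFinset.subset⟩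

lemma ofReal_mul_measure_inter_le_rpow_mul_eLpNorm {F : Type*} [NormedAddCommGroup F]
    {f : α → F} {A B : Set α} {c : ℝ} {q m : ℝ≥0∞} (hA : MeasurableSet A) (hB : MeasurableSet B)
    (hc : 0 ≤ c) (hAf : ∀ x ∈ A, c ≤ ‖f x‖) (hq : 1 ≤ q) (hBm : μ B ≤ m) :
    ENNReal.ofReal c * μ (A ∩ B) ≤ m ^ (1 - q⁻¹.toReal) * eLpNorm (B.indicator f) q μ := by
  have hκ : 0 ≤ 1 - q⁻¹.toReal := sub_nonneg.2 (ENNReal.toReal_inv_le_one_of_one_le hq)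
  rcases eq_or_ne (μ (A ∩ B)) 0 with h0 | h0
  · simp [h0]
  have hA_ind : ENNReal.ofReal c * μ (A ∩ B) ^ q⁻¹.toReal ≤ eLpNorm (B.indicator f) q μ := by
    have hq0 : q ≠ 0 := (zero_lt_one.trans_le hq).ne'
    calc ENNReal.ofReal c * μ (A ∩ B) ^ q⁻¹.toReal
        = eLpNorm ((A ∩ B).indicator fun _ => c) q μ := by
          rw [eLpNorm_indicator_const' (hA.inter hB) h0 hq0, ENNReal.toReal_inv, one_div,
            Real.enorm_of_nonneg hc]
      _ ≤ eLpNorm (B.indicator f) q μ := by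
          refine eLpNorm_mono fun x => ?_
          by_cases hx : x ∈ A ∩ B
          · rw [indicator_of_mem hx, indicator_of_mem hx.2, Real.norm_of_nonneg hc]
            exact hAf x hx.1
          · simp [indicator_of_notMem hx]
  calc ENNReal.ofReal c * μ (A ∩ B)
      = ENNReal.ofReal c * μ (A ∩ B) ^ q⁻¹.toReal * μ (A ∩ B) ^ (1 - q⁻¹.toReal) := by
        rw [mul_assoc, ← ENNReal.rpow_add_of_nonneg _ _ toReal_nonneg hκ, add_sub_cancel,
          ENNReal.rpow_one]
    _ ≤ eLpNorm (B.indicator f) q μ * m ^ (1 - q⁻¹.toReal) := by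
        gcongr
        exact (measure_mono inter_subset_right).trans hBm
    _ = m ^ (1 - q⁻¹.toReal) * eLpNorm (B.indicator f) q μ := mul_comm _ _

end

namespace IsUniformPartition

variable {G : Type*} [Group G] [MeasurableSpace G] {μ : Measure G} {π : Set (Set G)}
  {U V E : Set G}

lemma measure_le_measure [μ.IsMulLeftInvariant] (hπ : IsUniformPartition π U V) (hE : E ∈ π) :
    μ U ≤ μ E ∧ μ E ≤ μ V := by
  obtain ⟨x, -, hxU, hxV⟩ := hπ.2.2.2.2 E hE
  exact ⟨measure_smul μ x U ▸ measure_mono hxU, measure_smul μ x V ▸ measure_mono hxV⟩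

lemma measure_eq_sum_inter (hπ : IsUniformPartition π U V) {A : Set G} (hA : MeasurableSet A)
    {P : Finset (Set G)} (hPπ : ↑P ⊆ π) (hP : ∀ E ∈ π, μ (A ∩ E) ≠ 0 → E ∈ P) :
    μ A = ∑ E ∈ P, μ (A ∩ E) := by
  obtain ⟨hπ_cnt, hπ_meas, hπ_disj, hπ_cover, -⟩ := hπ
  have hA_eq : A = ⋃ E ∈ π, A ∩ E := by
    rw [← inter_iUnion₂, ← sUnion_eq_biUnion, hπ_cover, inter_univ]
  calc μ A = ∑' E : π, μ (A ∩ E) := by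
        conv_lhs => rw [hA_eq]
        exact measure_biUnion hπ_cnt
          (hπ_disj.mono fun _ => inter_subset_right) fun E hE => hA.inter (hπ_meas E hE)
    _ = ∑' E, π.indicator (fun E => μ (A ∩ E)) E := tsum_subtype π fun E => μ (A ∩ E)
    _ = ∑ E ∈ P, π.indicator (fun E => μ (A ∩ E)) E := by
        refine tsum_eq_sum fun E hEP => indicator_apply_eq_zero.2 fun hE => ?_
        by_contra h
        exact hEP (hP E hE h)
    _ = ∑ E ∈ P, μ (A ∩ E) := Finset.sum_congr rfl fun E hE => indicator_of_mem (hPπ hE) _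

lemma rpow_le_card_mul_partNorm {F : Type*} [NormedAddCommGroup F] {f : G → F}
    (hπ : IsUniformPartition π U V) {A : Set G} (hA : MeasurableSet A)
    {P : Finset (Set G)} (hPπ : ↑P ⊆ π) (hP : ∀ E ∈ π, μ (A ∩ E) ≠ 0 → E ∈ P)
    {q p : ℝ≥0∞} (hp1 : 1 ≤ p) (hp : p ≠ ∞) {C w : ℝ≥0∞}
    (hblock : ∀ E ∈ P, C * μ (A ∩ E) ≤ w * eLpNorm (E.indicator f) q μ) :
    (C * μ A) ^ p.toReal ≤
      (P.card : ℝ≥0∞) ^ (p.toReal - 1) * (w * partNorm μ q p π f) ^ p.toReal := by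
  have hp1' : 1 ≤ p.toReal := ENNReal.one_le_toReal_of_one_le hp1 hp
  have hp0 : 0 ≤ p.toReal := zero_le_one.trans hp1'
  have hsum : ∑ E ∈ P, eLpNorm (E.indicator f) q μ ^ p.toReal ≤ partNorm μ q p π f ^ p.toReal := by
    rw [partNorm, if_neg hp, ← ENNReal.rpow_mul, one_div_mul_cancel (by positivity),
      ENNReal.rpow_one, tsum_subtype π fun E => eLpNorm (E.indicator f) q μ ^ p.toReal]
    calc ∑ E ∈ P, eLpNorm (E.indicator f) q μ ^ p.toReal
        = ∑ E ∈ P, π.indicator (fun E => eLpNorm (E.indicator f) q μ ^ p.toReal) E :=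
          Finset.sum_congr rfl fun E hE =>
            (indicator_of_mem (hPπ hE) fun E => eLpNorm (E.indicator f) q μ ^ p.toReal).symm
      _ ≤ _ := ENNReal.sum_le_tsum P
  calc (C * μ A) ^ p.toReal = (∑ E ∈ P, C * μ (A ∩ E)) ^ p.toReal := by
        rw [hπ.measure_eq_sum_inter hA hPπ hP, Finset.mul_sum]
    _ ≤ (P.card : ℝ≥0∞) ^ (p.toReal - 1) * ∑ E ∈ P, (C * μ (A ∩ E)) ^ p.toReal :=
        ENNReal.rpow_sum_le_const_mul_sum_rpow P _ hp1'
    _ ≤ (P.card : ℝ≥0∞) ^ (p.toReal - 1) *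
          ∑ E ∈ P, (w * eLpNorm (E.indicator f) q μ) ^ p.toReal :=
        mul_le_mul' le_rfl (Finset.sum_le_sum fun E hE => ENNReal.rpow_le_rpow (hblock E hE) hp0)
    _ = (P.card : ℝ≥0∞) ^ (p.toReal - 1) *
          (w ^ p.toReal * ∑ E ∈ P, eLpNorm (E.indicator f) q μ ^ p.toReal) := by
        simp_rw [ENNReal.mul_rpow_of_nonneg _ _ hp0, Finset.mul_sum]
    _ ≤ (P.card : ℝ≥0∞) ^ (p.toReal - 1) * (w * partNorm μ q p π f) ^ p.toReal := by
        rw [ENNReal.mul_rpow_of_nonneg _ _ hp0]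
        gcongr

end IsUniformPartition

lemma IsUniformPartition.rpow_mul_measure_gball_rpow_le_partNorm {G : Type*} [Group G]
    [MeasurableSpace G] {μ : Measure G} [μ.IsMulLeftInvariant] {F : Type*}
    [NormedAddCommGroup F] {f : G → F} {nm : G → ℝ} {γ : ℝ} (hγ : 0 < γ) (hnm_inv : ∀ x : G, nm x⁻¹ = nm x)
    (hnm_mul : ∀ x y : G, nm (x * y) ≤ γ * (nm x + nm y)) {π : Set (Set G)} {s : ℝ}
    (hπ : IsUniformPartition π (gball nm 1 s) (gball nm 1 s * gball nm 1 s))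
    (hs : 2 * γ * s ≤ 1) (hs0 : μ (gball nm 1 s) ≠ 0) {A : Set G} {c R : ℝ}
    (hA : MeasurableSet A) (hAR : A ⊆ gball nm 1 R) (hc : 0 ≤ c) (hAf : ∀ x ∈ A, c ≤ ‖f x‖)
    (hR : μ (gball nm 1 (γ * (R + 2 * γ))) ≠ ∞) {q p : ℝ≥0∞} (hq1 : 1 ≤ q) (hp1 : 1 ≤ p)
    (hp : p ≠ ∞) :
    (ENNReal.ofReal c * μ A) ^ p.toReal * μ (gball nm 1 s) ^ (p.toReal - 1) ≤
      μ (gball nm 1 (γ * (R + 2 * γ))) ^ (p.toReal - 1) *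
        (μ (gball nm 1 (2 * γ * s)) ^ (1 - q⁻¹.toReal) * partNorm μ q p π f) ^ p.toReal := by
  have hV : gball nm 1 s * gball nm 1 s ⊆ gball nm 1 (2 * γ * s) :=
    gball_mul_gball_subset hγ hnm_mul s
  set S := {E ∈ π | μ (A ∩ E) ≠ 0}
  have hS_sub : ∀ E ∈ S, E ⊆ gball nm 1 (γ * (R + 2 * γ)) := by
    rintro E ⟨hEπ, hAE⟩
    obtain ⟨x, -, -, hxV⟩ := hπ.2.2.2.2 E hEπ
    obtain ⟨k, hkA, hkE⟩ := nonempty_of_measure_ne_zero hAE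
    have hEx : E ⊆ gball nm x 1 := by
      rw [gball_eq_smul]
      exact hxV.trans (smul_set_mono (hV.trans (gball_mono hs)))
    simpa using hEx.trans
      (gball_subset_gball_one hγ hnm_inv hnm_mul (hEx hkE) (mem_gball_one.1 (hAR hkA)))
  obtain ⟨P, hPS, hP_card⟩ := exists_finset_card_mul_le_measure (hπ.2.2.1.subset (sep_subset _ _))
    (fun E hE => hπ.2.1 E hE.1) hS_sub (fun E hE => (hπ.measure_le_measure hE.1).1) hs0 hR
  have hPπ : ↑P ⊆ π := hPS ▸ sep_subset _ _
  have hP : ∀ E ∈ π, μ (A ∩ E) ≠ 0 → E ∈ P := fun E hE hAE => by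
    rw [← Finset.mem_coe, hPS]
    exact ⟨hE, hAE⟩
  have hp1' : 0 ≤ p.toReal - 1 := sub_nonneg.2 (ENNReal.one_le_toReal_of_one_le hp1 hp)
  have hblocks := hπ.rpow_le_card_mul_partNorm hA hPπ hP hp1 hp fun E hE =>
    ofReal_mul_measure_inter_le_rpow_mul_eLpNorm hA (hπ.2.1 E (hPπ hE)) hc hAf hq1
      ((hπ.measure_le_measure (hPπ hE)).2.trans (measure_mono hV))
  calc (ENNReal.ofReal c * μ A) ^ p.toReal * μ (gball nm 1 s) ^ (p.toReal - 1)
      ≤ (P.card : ℝ≥0∞) ^ (p.toReal - 1) *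
          (μ (gball nm 1 (2 * γ * s)) ^ (1 - q⁻¹.toReal) * partNorm μ q p π f) ^ p.toReal *
          μ (gball nm 1 s) ^ (p.toReal - 1) := by gcongr
    _ = (P.card * μ (gball nm 1 s)) ^ (p.toReal - 1) *
          (μ (gball nm 1 (2 * γ * s)) ^ (1 - q⁻¹.toReal) * partNorm μ q p π f) ^ p.toReal := by
        rw [ENNReal.mul_rpow_of_nonneg _ _ hp1']
        ring
    _ ≤ _ := by gcongr

lemma exists_measurableSet_subset_gball_le_norm {G : Type*} [Group G] [MeasurableSpace G]
    {μ : Measure G} {F : Type*} [NormedAddCommGroup F] {f : G → F} {nm : G → ℝ}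
    (hnm : Measurable nm) (hf : AEStronglyMeasurable f μ) (hf0 : ¬f =ᵐ[μ] 0) :
    ∃ c > 0, ∃ R ≥ 0, ∃ A ⊆ gball nm 1 R, MeasurableSet A ∧ μ A ≠ 0 ∧ ∀ x ∈ A, c ≤ ‖f x‖ := by
  have hcover : {x | f x ≠ 0} ⊆ ⋃ n : ℕ, {x | ((n : ℝ) + 1)⁻¹ < ‖f x‖} ∩ gball nm 1 n := by
    intro x hx
    have hfx : 0 < ‖f x‖ := norm_pos_iff.2 hx
    obtain ⟨n, hn⟩ := exists_nat_gt (max ‖f x‖⁻¹ (nm x))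
    refine mem_iUnion.2 ⟨n, show ((n : ℝ) + 1)⁻¹ < ‖f x‖ from ?_,
      mem_gball_one.2 ((le_max_right _ _).trans_lt hn)⟩
    rw [inv_lt_comm₀ (by positivity) hfx]
    linarith [le_max_left ‖f x‖⁻¹ (nm x)]
  obtain ⟨n, hn⟩ : ∃ n : ℕ, μ ({x | ((n : ℝ) + 1)⁻¹ < ‖f x‖} ∩ gball nm 1 n) ≠ 0 := by
    by_contra! h
    exact hf0 (ae_iff.2 (measure_mono_null hcover (measure_iUnion_null h)))
  obtain ⟨A, hA_sub, hA, hA_eq⟩ := ((aestronglyMeasurable_const.nullMeasurableSet_lt hf.norm).inter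
    (measurableSet_gball_one hnm _).nullMeasurableSet).exists_measurable_subset_ae_eq
  exact ⟨_, by positivity, n, n.cast_nonneg, A, hA_sub.trans inter_subset_right, hA,
    (measure_congr hA_eq).trans_ne hn, fun x hx => (hA_sub hx).1.le⟩

lemma eq_zero_of_eventually_le_mul_rpow {ι : Type*} {l : Filter ι} [l.NeBot] {v : ι → ℝ≥0∞}
    (hv : Tendsto v l (𝓝 0)) {K C : ℝ≥0∞} (hC : C ≠ ∞) {δ : ℝ} (hδ : 0 < δ)
    (h : ∀ᶠ i in l, K ≤ C * v i ^ δ) : K = 0 := by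
  have hlim : Tendsto (fun i => C * v i ^ δ) l (𝓝 0) := by
    simpa [ENNReal.zero_rpow_of_pos hδ] using
      ENNReal.Tendsto.const_mul (((ENNReal.continuous_rpow_const (y := δ)).tendsto 0).comp hv)
        (Or.inr hC)
  exact nonpos_iff_eq_zero.1 (ge_of_tendsto hlim h)

section Volume

variable {G : Type*} [Group G] [MeasurableSpace G] {μ : Measure G} {nm : G → ℝ} {ρ : ℝ}

lemma measure_gball_mul (hvol : ∀ r : ℝ, 0 < r → μ (gball nm 1 r) = ENNReal.ofReal (r ^ ρ))
    {a b : ℝ} (ha : 0 < a) (hb : 0 < b) :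
    μ (gball nm 1 (a * b)) = μ (gball nm 1 a) * μ (gball nm 1 b) := by
  rw [hvol _ (mul_pos ha hb), hvol a ha, hvol b hb, Real.mul_rpow ha.le hb.le,
    ENNReal.ofReal_mul (by positivity)]

lemma measure_gball_ne_zero (hvol : ∀ r : ℝ, 0 < r → μ (gball nm 1 r) = ENNReal.ofReal (r ^ ρ))
    {r : ℝ} (hr : 0 < r) : μ (gball nm 1 r) ≠ 0 :=
  (hvol r hr).trans_ne (ENNReal.ofReal_pos.2 (Real.rpow_pos_of_pos hr ρ)).ne'

lemma measure_gball_ne_top (hvol : ∀ r : ℝ, 0 < r → μ (gball nm 1 r) = ENNReal.ofReal (r ^ ρ))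
    {r : ℝ} (hr : 0 < r) : μ (gball nm 1 r) ≠ ∞ :=
  (hvol r hr).trans_ne ENNReal.ofReal_ne_top

lemma tendsto_measure_gball_nhdsGT_zero (hρ : 0 < ρ)
    (hvol : ∀ r : ℝ, 0 < r → μ (gball nm 1 r) = ENNReal.ofReal (r ^ ρ)) :
    Tendsto (fun r => μ (gball nm 1 r)) (𝓝[>] 0) (𝓝 0) := by
  have h : Tendsto (fun r : ℝ => ENNReal.ofReal (r ^ ρ)) (𝓝[>] 0) (𝓝 0) := by
    simpa [Function.comp_def, Real.zero_rpow hρ.ne'] using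
      (ENNReal.continuous_ofReal.tendsto _).comp
      ((Real.continuousAt_rpow_const 0 ρ (Or.inr hρ.le)).tendsto.mono_left nhdsWithin_le_nhds)
  exact h.congr' (eventually_nhdsWithin_of_forall fun r hr => (hvol r hr).symm)

end Volume

lemma rpow_le_alphaNorm_rpow_mul_measure_gball {G : Type*} [Group G] [MeasurableSpace G]
    {μ : Measure G} [μ.IsMulLeftInvariant] {F : Type*} [NormedAddCommGroup F] {f : G → F}
    {nm : G → ℝ} {γ ρ : ℝ} (hγ : 1 ≤ γ) (hnm_inv : ∀ x : G, nm x⁻¹ = nm x)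
    (hnm_mul : ∀ x y : G, nm (x * y) ≤ γ * (nm x + nm y))
    (hvol : ∀ r : ℝ, 0 < r → μ (gball nm 1 r) = ENNReal.ofReal (r ^ ρ))
    {πr : ℝ → Set (Set G)} {r : ℝ} (hr0 : 0 < r) (hr1 : r ≤ 1)
    (hπ : IsUniformPartition (πr r) (gball nm 1 (r / (4 * γ ^ 2)))
      (gball nm 1 (r / (4 * γ ^ 2)) * gball nm 1 (r / (4 * γ ^ 2))))
    {A : Set G} {c R : ℝ} (hA : MeasurableSet A) (hAR : A ⊆ gball nm 1 R) (hR : 0 ≤ R)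
    (hc : 0 ≤ c) (hAf : ∀ x ∈ A, c ≤ ‖f x‖) {q p α : ℝ≥0∞} (hq1 : 1 ≤ q) (hp1 : 1 ≤ p)
    (hp : p ≠ ∞) :
    (ENNReal.ofReal c * μ A) ^ p.toReal * μ (gball nm 1 (4 * γ ^ 2)⁻¹) ^ (p.toReal - 1) ≤
      μ (gball nm 1 (γ * (R + 2 * γ))) ^ (p.toReal - 1) *
        alphaNorm μ nm πr q p α f ^ p.toReal *
        μ (gball nm 1 r) ^ (1 - α⁻¹.toReal * p.toReal) := by
  set v := μ (gball nm 1 r)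
  set L := alphaNorm μ nm πr q p α f
  have hγ0 : 0 < γ := zero_lt_one.trans_le hγ
  have hv0 : v ≠ 0 := measure_gball_ne_zero hvol hr0
  have hv_top : v ≠ ∞ := measure_gball_ne_top hvol hr0
  have hx1 : 0 ≤ p.toReal - 1 := sub_nonneg.2 (ENNReal.one_le_toReal_of_one_le hp1 hp)
  have hx0 : 0 ≤ p.toReal := by linarith
  have hκ : 0 ≤ 1 - q⁻¹.toReal := sub_nonneg.2 (ENNReal.toReal_inv_le_one_of_one_le hq1)
  have h2γs : 2 * γ * (r / (4 * γ ^ 2)) = r / (2 * γ) := by field_simp; ring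
  have hr2γ : r / (2 * γ) ≤ r := div_le_self hr0.le (by linarith)
  have hsmall : μ (gball nm 1 (r / (4 * γ ^ 2))) = μ (gball nm 1 (4 * γ ^ 2)⁻¹) * v := by
    rw [div_eq_inv_mul]
    exact measure_gball_mul hvol (by positivity) hr0
  have hblocks := hπ.rpow_mul_measure_gball_rpow_le_partNorm hγ0 hnm_inv hnm_mul
    (h2γs ▸ hr2γ.trans hr1) (measure_gball_ne_zero hvol (by positivity))
    hA hAR hc hAf (measure_gball_ne_top hvol (by positivity)) hq1 hp1 hp
  rw [h2γs] at hblocks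
  have hL : v ^ (α⁻¹.toReal - q⁻¹.toReal) * partNorm μ q p (πr r) f ≤ L :=
    le_iSup₂_of_le (f := fun r _ => μ (gball nm 1 r) ^ (α⁻¹.toReal - q⁻¹.toReal) *
      partNorm μ q p (πr r) f) r hr0 le_rfl
  have hv_pow : (v ^ (1 - α⁻¹.toReal)) ^ p.toReal =
      v ^ (1 - α⁻¹.toReal * p.toReal) * v ^ (p.toReal - 1) := by
    rw [← ENNReal.rpow_mul, ← ENNReal.rpow_add _ _ hv0 hv_top]
    ring_nf
  refine (ENNReal.mul_le_mul_iff_left (ENNReal.rpow_pos (pos_iff_ne_zero.2 hv0) hv_top).ne'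
    (ENNReal.rpow_ne_top_of_nonneg hx1 hv_top)).1 ?_
  calc (ENNReal.ofReal c * μ A) ^ p.toReal * μ (gball nm 1 (4 * γ ^ 2)⁻¹) ^ (p.toReal - 1) *
        v ^ (p.toReal - 1)
      = (ENNReal.ofReal c * μ A) ^ p.toReal *
          μ (gball nm 1 (r / (4 * γ ^ 2))) ^ (p.toReal - 1) := by
        rw [hsmall, ENNReal.mul_rpow_of_nonneg _ _ hx1, mul_assoc]
    _ ≤ μ (gball nm 1 (γ * (R + 2 * γ))) ^ (p.toReal - 1) *
          (μ (gball nm 1 (r / (2 * γ))) ^ (1 - q⁻¹.toReal) * partNorm μ q p (πr r) f) ^ p.toReal :=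
        hblocks
    _ ≤ μ (gball nm 1 (γ * (R + 2 * γ))) ^ (p.toReal - 1) * (v ^ (1 - α⁻¹.toReal) *
          (v ^ (α⁻¹.toReal - q⁻¹.toReal) * partNorm μ q p (πr r) f)) ^ p.toReal := by
        rw [← mul_assoc, ← ENNReal.rpow_add _ _ hv0 hv_top, sub_add_sub_cancel]
        gcongr
        exact measure_mono (gball_mono hr2γ)
    _ ≤ μ (gball nm 1 (γ * (R + 2 * γ))) ^ (p.toReal - 1) *
          (v ^ (1 - α⁻¹.toReal) * L) ^ p.toReal := by
        gcongr
    _ = μ (gball nm 1 (γ * (R + 2 * γ))) ^ (p.toReal - 1) * L ^ p.toReal *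
          v ^ (1 - α⁻¹.toReal * p.toReal) * v ^ (p.toReal - 1) := by
        rw [ENNReal.mul_rpow_of_nonneg _ _ hx0, hv_pow]
        ring

theorem statement10_general
    (μ : Measure G) [μ.IsHaarMeasure]
    (nm : G → ℝ) (γ ρ : ℝ)
    (hnm_cont : Continuous nm)
    (hnm_inv : ∀ x : G, nm x⁻¹ = nm x)
    (hγ : 1 ≤ γ)
    (hnm_mul : ∀ x y : G, nm (x * y) ≤ γ * (nm x + nm y))
    (hρ : 0 < ρ)
    (hvol : ∀ r : ℝ, 0 < r → μ (gball nm 1 r) = ENNReal.ofReal (r ^ ρ))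
    (πr : ℝ → Set (Set G))
    (hπr : ∀ r : ℝ, 0 < r → IsUniformPartition (πr r)
      (gball nm 1 (r / (4 * γ ^ 2)))
      (gball nm 1 (r / (4 * γ ^ 2)) * gball nm 1 (r / (4 * γ ^ 2))))
   (q p α : ℝ≥0∞) (hq1 : 1 ≤ q) (hp1 : 1 ≤ p) (hpα : p < α) :
    ∀ f : G → ℂ, AEStronglyMeasurable f μ →
      alphaNorm μ nm πr q p α f < ∞ → f =ᵐ[μ] 0 := by
  intro f hf hfin
  by_contra hf0
  obtain ⟨c, hc, R, hR, A, hAR, hA, hA0, hAf⟩ :=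
    exists_measurableSet_subset_gball_le_norm hnm_cont.measurable hf hf0
  have hp : p ≠ ∞ := hpα.ne_top
  have hx1 : 0 ≤ p.toReal - 1 := sub_nonneg.2 (ENNReal.one_le_toReal_of_one_le hp1 hp)
  have hC : μ (gball nm 1 (γ * (R + 2 * γ))) ^ (p.toReal - 1) *
      alphaNorm μ nm πr q p α f ^ p.toReal ≠ ∞ :=
    mul_ne_top (rpow_ne_top_of_nonneg hx1 (measure_gball_ne_top hvol (by positivity)))
      (rpow_ne_top_of_nonneg (by linarith) hfin.ne)
  have hbound := fun r (hr : r ∈ Ioc (0 : ℝ) 1) =>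
    rpow_le_alphaNorm_rpow_mul_measure_gball (α := α) hγ hnm_inv hnm_mul hvol hr.1 hr.2
      (hπr r hr.1) hA hAR hR hc.le hAf hq1 hp1 hp
  have hK := eq_zero_of_eventually_le_mul_rpow (tendsto_measure_gball_nhdsGT_zero hρ hvol) hC
    (sub_pos.2 (ENNReal.toReal_inv_mul_toReal_lt_one (zero_lt_one.trans_le hp1).ne' hpα))
    (eventually_of_mem (Ioc_mem_nhdsGT zero_lt_one) hbound)
  refine mul_ne_zero (rpow_pos_of_nonneg ?_ (by linarith)).ne'
    (rpow_pos_of_nonneg (pos_iff_ne_zero.2 (measure_gball_ne_zero hvol (by positivity))) hx1).ne' hK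
  exact ENNReal.mul_pos (by simpa using hc) hA0

theorem statement10
    (μ : Measure G) [μ.IsHaarMeasure]
    (nm : G → ℝ) (γ ρ : ℝ)
    (hnm_cont : Continuous nm)
    (hnm_nonneg : ∀ x : G, 0 ≤ nm x)
    (hnm_zero : ∀ x : G, nm x = 0 ↔ x = 1)
    (hnm_inv : ∀ x : G, nm x⁻¹ = nm x)
    (hγ : 1 ≤ γ)
    (hnm_mul : ∀ x y : G, nm (x * y) ≤ γ * (nm x + nm y))
    (hball_cpt : ∀ (x : G) (r : ℝ), 0 < r → IsCompact (closure (gball nm x r)))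
    (hρ : 0 < ρ)
    (hvol : ∀ r : ℝ, 0 < r → μ (gball nm 1 r) = ENNReal.ofReal (r ^ ρ))
    (πr : ℝ → Set (Set G))
    (hπr : ∀ r : ℝ, 0 < r → IsUniformPartition (πr r)
      (gball nm 1 (r / (4 * γ ^ 2)))
      (gball nm 1 (r / (4 * γ ^ 2)) * gball nm 1 (r / (4 * γ ^ 2))))
   (q p α : ℝ≥0∞) (hq1 : 1 ≤ q) (hp1 : 1 ≤ p) (hpα : p < α) :
    ∀ f : G → ℂ, AEStronglyMeasurable f μ →
      alphaNorm μ nm πr q p α f < ∞ → f =ᵐ[μ] 0 :=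
  statement10_general μ nm γ ρ hnm_cont hnm_inv hγ hnm_mul hρ hvol πr hπr q p α hq1 hp1 hpα
end

section
/- Let (q₁,p₁,α₁) and (q₂,p₂,α₂) be elements of [1,∞]³ with q₁ ≤ α₁ and q₂ ≤ α₂, and let q, p, α be defined by 1/q = 1/q₁ + 1/q₂ ≤ 1, 1/p = 1/p₁ + 1/p₂ ≤ 1 and 1/α = 1/α₁ + 1/α₂. Then for all measurable functions f and g on G: ‖f·g‖_{q,p,α} ≤ ‖f‖_{q₁,p₁,α₁} · ‖g‖_{q₂,p₂,α₂}. -/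
open MeasureTheory ENNReal NNReal Set Filter Topology Pointwise

variable {G : Type*} [Group G] [TopologicalSpace G] [IsTopologicalGroup G]
  [T2Space G] [LocallyCompactSpace G] [SigmaCompactSpace G]
  [MeasurableSpace G] [BorelSpace G]

/-!
On each block `E` of the partition `π_r`, Hölder's inequality in `L^q` gives
`‖f g χ_E‖_q ≤ ‖f χ_E‖_{q₁} ‖g χ_E‖_{q₂}`, and Hölder's inequality in `ℓ^p` over the blocks turns
this into `‖f g‖^{π_r}_{q,p} ≤ ‖f‖^{π_r}_{q₁,p₁} ‖g‖^{π_r}_{q₂,p₂}`. Since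
`1/α - 1/q = (1/α₁ - 1/q₁) + (1/α₂ - 1/q₂)`, the volume weight `λ(B(e,r))^{1/α - 1/q}` splits into
the two weights, and taking the supremum over `r` concludes.
-/

lemma ENNReal.HolderTriple.toReal_inv_eq_add (a b c : ℝ≥0∞) [HolderTriple a b c]
    (ha : a ≠ 0) (hb : b ≠ 0) : c⁻¹.toReal = a⁻¹.toReal + b⁻¹.toReal := by
  rw [HolderTriple.inv_eq a b c, ENNReal.toReal_add (inv_ne_top.mpr ha) (inv_ne_top.mpr hb)]

section SeqLpNorm

variable {ι : Type*}

noncomputable def seqLpNorm (p : ℝ≥0∞) (a : ι → ℝ≥0∞) : ℝ≥0∞ :=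
  if p = ∞ then ⨆ i, a i else (∑' i, a i ^ p.toReal) ^ (1 / p.toReal)

lemma seqLpNorm_mono (p : ℝ≥0∞) {a b : ι → ℝ≥0∞} (hab : a ≤ b) :
    seqLpNorm p a ≤ seqLpNorm p b := by
  unfold seqLpNorm
  split_ifs
  · exact iSup_mono hab
  · gcongr with i
    exact hab i

lemma seqLpNorm_const_mul {p : ℝ≥0∞} (hp : p ≠ 0) (c : ℝ≥0∞) (a : ι → ℝ≥0∞) :
    seqLpNorm p (fun i => c * a i) = c * seqLpNorm p a := by
  unfold seqLpNorm
  split_ifs with hp_top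
  · exact (ENNReal.mul_iSup c a).symm
  · have hp_pos : 0 < p.toReal := ENNReal.toReal_pos hp hp_top
    simp only [ENNReal.mul_rpow_of_nonneg _ _ hp_pos.le]
    rw [ENNReal.tsum_mul_left, ENNReal.mul_rpow_of_nonneg _ _ (by positivity),
      ← ENNReal.rpow_mul, mul_one_div_cancel hp_pos.ne', ENNReal.rpow_one]

lemma seqLpNorm_mul_le_top_mul {p : ℝ≥0∞} (hp : p ≠ 0) (a b : ι → ℝ≥0∞) :
    seqLpNorm p (a * b) ≤ seqLpNorm ∞ a * seqLpNorm p b := by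
  calc seqLpNorm p (a * b) ≤ seqLpNorm p (fun i => (⨆ j, a j) * b i) :=
        seqLpNorm_mono p fun i => mul_le_mul_left (le_iSup a i) (b i)
    _ = seqLpNorm ∞ a * seqLpNorm p b := by
        rw [seqLpNorm_const_mul hp]
        simp only [seqLpNorm, if_true]

lemma seqLpNorm_mul_le_of_ne_top {p₁ p₂ p : ℝ≥0∞} [HolderTriple p₁ p₂ p]
    (hp₁ : p₁ ≠ 0) (hp₂ : p₂ ≠ 0) (hp₁_top : p₁ ≠ ∞) (hp₂_top : p₂ ≠ ∞) (a b : ι → ℝ≥0∞) :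
    seqLpNorm p (a * b) ≤ seqLpNorm p₁ a * seqLpNorm p₂ b := by
  -- Hölder's inequality for the counting measure on `ι`, with every subset measurable.
  let _ : MeasurableSpace ι := ⊤
  have hp_top : p ≠ ∞ := ne_top_of_le_ne_top hp₁_top (HolderTriple.le p₁ p₂ p)
  have hp_real : 1 / p.toReal = 1 / p₁.toReal + 1 / p₂.toReal := by
    simpa only [one_div, ENNReal.toReal_inv] using
      HolderTriple.toReal_inv_eq_add p₁ p₂ p hp₁ hp₂
  have hp₁_pos : 0 < p₁.toReal := ENNReal.toReal_pos hp₁ hp₁_top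
  have hp₂_pos : 0 < p₂.toReal := ENNReal.toReal_pos hp₂ hp₂_top
  have hp_pos : 0 < p.toReal := by
    rw [← one_div_pos, hp_real]
    positivity
  have hpp₁ : p.toReal < p₁.toReal := by
    refine lt_of_one_div_lt_one_div hp₁_pos ?_
    rw [hp_real]
    exact lt_add_of_pos_right _ (one_div_pos.mpr hp₂_pos)
  simpa only [seqLpNorm, if_neg hp_top, if_neg hp₁_top, if_neg hp₂_top,
    lintegral_count' measurable_from_top] using
    ENNReal.lintegral_Lp_mul_le_Lq_mul_Lr hp_pos hpp₁ hp_real Measure.count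
      measurable_from_top.aemeasurable measurable_from_top.aemeasurable

theorem seqLpNorm_mul_le {p₁ p₂ p : ℝ≥0∞} [HolderTriple p₁ p₂ p]
    (hp₁ : p₁ ≠ 0) (hp₂ : p₂ ≠ 0) (a b : ι → ℝ≥0∞) :
    seqLpNorm p (a * b) ≤ seqLpNorm p₁ a * seqLpNorm p₂ b := by
  rcases eq_or_ne p₁ ∞ with rfl | hp₁_top
  · obtain rfl : p = p₂ := HolderTriple.unique ∞ p₂ p p₂
    exact seqLpNorm_mul_le_top_mul hp₂ a b
  rcases eq_or_ne p₂ ∞ with rfl | hp₂_top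
  · obtain rfl : p = p₁ := HolderTriple.unique p₁ ∞ p p₁
    rw [mul_comm a, mul_comm (seqLpNorm p a)]
    exact seqLpNorm_mul_le_top_mul hp₁ b a
  exact seqLpNorm_mul_le_of_ne_top hp₁ hp₂ hp₁_top hp₂_top a b

end SeqLpNorm

theorem eLpNorm_mul_le_mul_eLpNorm {X R : Type*} [MeasurableSpace X] [NormedRing R]
    {μ : Measure X} {p q r : ℝ≥0∞} [HolderTriple p q r] {f g : X → R}
    (hf : AEStronglyMeasurable f μ) (hg : AEStronglyMeasurable g μ) :
    eLpNorm (f * g) r μ ≤ eLpNorm f p μ * eLpNorm g q μ :=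
  (eLpNorm_smul_le_mul_eLpNorm (p := p) (q := q) (r := r) hg hf :)

lemma partNorm_eq_seqLpNorm {X E : Type*} [MeasurableSpace X] [NormedAddCommGroup E]
    (μ : Measure X) (q p : ℝ≥0∞) (π : Set (Set X)) (f : X → E) :
    partNorm μ q p π f = seqLpNorm p (fun A : π => eLpNorm ((A : Set X).indicator f) q μ) := by
  unfold partNorm seqLpNorm
  split_ifs
  · exact iSup_subtype'
  · rfl

theorem partNorm_mul_le {X R : Type*} [MeasurableSpace X] [NormedRing R] (μ : Measure X)
    {π : Set (Set X)} (hπ : ∀ A ∈ π, MeasurableSet A) {q₁ q₂ q p₁ p₂ p : ℝ≥0∞}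
    [HolderTriple q₁ q₂ q] [HolderTriple p₁ p₂ p] (hp₁ : p₁ ≠ 0) (hp₂ : p₂ ≠ 0)
    {f g : X → R} (hf : AEStronglyMeasurable f μ) (hg : AEStronglyMeasurable g μ) :
    partNorm μ q p π (f * g) ≤ partNorm μ q₁ p₁ π f * partNorm μ q₂ p₂ π g := by
  have hblock (A : π) : eLpNorm ((A : Set X).indicator (f * g)) q μ ≤
      eLpNorm ((A : Set X).indicator f) q₁ μ * eLpNorm ((A : Set X).indicator g) q₂ μ := by
    rw [show (A : Set X).indicator (f * g) = (A : Set X).indicator f * (A : Set X).indicator g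
      from indicator_mul _ f g]
    exact eLpNorm_mul_le_mul_eLpNorm (hf.indicator (hπ A A.2)) (hg.indicator (hπ A A.2))
  simp only [partNorm_eq_seqLpNorm]
  exact (seqLpNorm_mono p hblock).trans (seqLpNorm_mul_le hp₁ hp₂ _ _)

lemma le_alphaNorm {X E : Type*} [Group X] [MeasurableSpace X] [NormedAddCommGroup E]
    (μ : Measure X) (nm : X → ℝ) (πr : ℝ → Set (Set X)) (q p α : ℝ≥0∞) (f : X → E)
    {r : ℝ} (hr : 0 < r) :
    μ (gball nm 1 r) ^ (α⁻¹.toReal - q⁻¹.toReal) * partNorm μ q p (πr r) f ≤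
      alphaNorm μ nm πr q p α f :=
  le_iSup₂ (f := fun r (_ : 0 < r) =>
    μ (gball nm 1 r) ^ (α⁻¹.toReal - q⁻¹.toReal) * partNorm μ q p (πr r) f) r hr

theorem statement11_general
    (μ : Measure G)
    (nm : G → ℝ) (γ ρ : ℝ)
    (hvol : ∀ r : ℝ, 0 < r → μ (gball nm 1 r) = ENNReal.ofReal (r ^ ρ))
    (πr : ℝ → Set (Set G))
    (hπr : ∀ r : ℝ, 0 < r → IsUniformPartition (πr r)
      (gball nm 1 (r / (4 * γ ^ 2)))
      (gball nm 1 (r / (4 * γ ^ 2)) * gball nm 1 (r / (4 * γ ^ 2))))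
   (q₁ p₁ α₁ q₂ p₂ α₂ q p α : ℝ≥0∞)
    (hq₁ : 1 ≤ q₁) (hp₁ : 1 ≤ p₁) (hα₁ : 1 ≤ α₁)
    (hq₂ : 1 ≤ q₂) (hp₂ : 1 ≤ p₂) (hα₂ : 1 ≤ α₂)
    (hq : 1 / q₁ + 1 / q₂ = 1 / q)
    (hp : 1 / p₁ + 1 / p₂ = 1 / p)
    (hα : 1 / α₁ + 1 / α₂ = 1 / α)
    (f g : G → ℂ) (hf : AEStronglyMeasurable f μ) (hg : AEStronglyMeasurable g μ) :
    alphaNorm μ nm πr q p α (f * g) ≤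
      alphaNorm μ nm πr q₁ p₁ α₁ f * alphaNorm μ nm πr q₂ p₂ α₂ g := by
  have : HolderTriple q₁ q₂ q := ⟨by simpa only [one_div] using hq⟩
  have : HolderTriple p₁ p₂ p := ⟨by simpa only [one_div] using hp⟩
  have : HolderTriple α₁ α₂ α := ⟨by simpa only [one_div] using hα⟩
  have ne_zero_of_one_le {s : ℝ≥0∞} (hs : 1 ≤ s) : s ≠ 0 := (zero_lt_one.trans_le hs).ne'
  have hexp : α⁻¹.toReal - q⁻¹.toReal =
      (α₁⁻¹.toReal - q₁⁻¹.toReal) + (α₂⁻¹.toReal - q₂⁻¹.toReal) := by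
    rw [HolderTriple.toReal_inv_eq_add α₁ α₂ α (ne_zero_of_one_le hα₁) (ne_zero_of_one_le hα₂),
      HolderTriple.toReal_inv_eq_add q₁ q₂ q (ne_zero_of_one_le hq₁) (ne_zero_of_one_le hq₂)]
    ring
  refine iSup₂_le fun r hr => ?_
  have hvol_pos : μ (gball nm 1 r) ≠ 0 := by
    simpa [hvol r hr] using Real.rpow_pos_of_pos hr ρ
  have hvol_fin : μ (gball nm 1 r) ≠ ∞ := by simp [hvol r hr]
  calc μ (gball nm 1 r) ^ (α⁻¹.toReal - q⁻¹.toReal) * partNorm μ q p (πr r) (f * g)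
      ≤ (μ (gball nm 1 r) ^ (α₁⁻¹.toReal - q₁⁻¹.toReal) * partNorm μ q₁ p₁ (πr r) f) *
          (μ (gball nm 1 r) ^ (α₂⁻¹.toReal - q₂⁻¹.toReal) * partNorm μ q₂ p₂ (πr r) g) := by
        rw [hexp, ENNReal.rpow_add _ _ hvol_pos hvol_fin, mul_mul_mul_comm]
        gcongr
        exact partNorm_mul_le μ (hπr r hr).2.1 (ne_zero_of_one_le hp₁) (ne_zero_of_one_le hp₂)
          hf hg
    _ ≤ _ := mul_le_mul' (le_alphaNorm μ nm πr q₁ p₁ α₁ f hr)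
        (le_alphaNorm μ nm πr q₂ p₂ α₂ g hr)

theorem statement11
    (μ : Measure G) [μ.IsHaarMeasure]
    (nm : G → ℝ) (γ ρ : ℝ)
    (hnm_cont : Continuous nm)
    (hnm_nonneg : ∀ x : G, 0 ≤ nm x)
    (hnm_zero : ∀ x : G, nm x = 0 ↔ x = 1)
    (hnm_inv : ∀ x : G, nm x⁻¹ = nm x)
    (hγ : 1 ≤ γ)
    (hnm_mul : ∀ x y : G, nm (x * y) ≤ γ * (nm x + nm y))
    (hball_cpt : ∀ (x : G) (r : ℝ), 0 < r → IsCompact (closure (gball nm x r)))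
    (hρ : 0 < ρ)
    (hvol : ∀ r : ℝ, 0 < r → μ (gball nm 1 r) = ENNReal.ofReal (r ^ ρ))
    (πr : ℝ → Set (Set G))
    (hπr : ∀ r : ℝ, 0 < r → IsUniformPartition (πr r)
      (gball nm 1 (r / (4 * γ ^ 2)))
      (gball nm 1 (r / (4 * γ ^ 2)) * gball nm 1 (r / (4 * γ ^ 2))))
   (q₁ p₁ α₁ q₂ p₂ α₂ q p α : ℝ≥0∞)
    (hq₁ : 1 ≤ q₁) (hp₁ : 1 ≤ p₁) (hα₁ : 1 ≤ α₁)
    (hq₂ : 1 ≤ q₂) (hp₂ : 1 ≤ p₂) (hα₂ : 1 ≤ α₂)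
    (hqα₁ : q₁ ≤ α₁) (hqα₂ : q₂ ≤ α₂)
    (hq : 1 / q₁ + 1 / q₂ = 1 / q) (hq1 : 1 ≤ q)
    (hp : 1 / p₁ + 1 / p₂ = 1 / p) (hp1 : 1 ≤ p)
    (hα : 1 / α₁ + 1 / α₂ = 1 / α)
    (f g : G → ℂ) (hf : AEStronglyMeasurable f μ) (hg : AEStronglyMeasurable g μ) :
    alphaNorm μ nm πr q p α (f * g) ≤
      alphaNorm μ nm πr q₁ p₁ α₁ f * alphaNorm μ nm πr q₂ p₂ α₂ g :=
  statement11_general μ nm γ ρ hvol πr hπr q₁ p₁ α₁ q₂ p₂ α₂ q p α hq₁ hp₁ hα₁ hq₂ hp₂ hα₂ hq hp hα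
    f g hf hg
end

section
/- Let p₁, p₂, q₁, q₂, α ∈ [1,∞] with q₁ ≤ q₂ ≤ α ≤ p₂ ≤ p₁. Then for every measurable function f on G: ‖f‖_{q₁,p₁,α} ≤ (1/(2γ))^{ρ(1/q₁ − 1/q₂)} · ‖f‖_{q₂,p₂,α}; moreover ‖f‖_{q₁,q₁,q₁} = ‖f‖_{q₁}. In particular (L^{q₂},L^{p₂})^α(G) ⊆ (L^{q₁},L^{p₁})^α(G). -/
/-!
By the quasi-triangle inequality `B(e,s)·B(e,s) ⊆ B(e,2γs)`, every block of `π_r` lies in a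
translate of `B(e, r/(2γ))`, so has measure at most `(r/(2γ))^ρ`. Hölder's inequality on a block
`A` gives `‖f χ_A‖_{q₁} ≤ λ(A)^{1/q₁-1/q₂} ‖f χ_A‖_{q₂}`, and `ℓ^{p₂}` embeds contractively
in `ℓ^{p₁}`. Against the weight `λ(B(e,r))^{1/α-1/q} = r^{ρ(1/α-1/q)}` the powers of `r` cancel,
leaving the constant `(1/(2γ))^{ρ(1/q₁-1/q₂)}`. For `q = p = α` the weight is `1`, and since the
blocks partition `G`, the partition norm is the `L^q` norm.
-/

open MeasureTheory ENNReal NNReal Set Filter Topology Pointwise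

variable {G : Type*} [Group G] [TopologicalSpace G] [IsTopologicalGroup G]
  [T2Space G] [LocallyCompactSpace G] [SigmaCompactSpace G]
  [MeasurableSpace G] [BorelSpace G]

namespace ENNReal

variable {ι : Type*}

lemma le_tsum_rpow_one_div (x : ι → ℝ≥0∞) {c : ℝ} (hc : 0 < c) (i : ι) :
    x i ≤ (∑' j, x j ^ c) ^ (1 / c) := by
  have h := ENNReal.rpow_le_rpow (ENNReal.le_tsum (f := fun j => x j ^ c) i)
    (one_div_nonneg.mpr hc.le)
  rwa [← ENNReal.rpow_mul, mul_one_div_cancel hc.ne', ENNReal.rpow_one] at h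

lemma tsum_rpow_one_div_le_of_le (x : ι → ℝ≥0∞) {c d : ℝ} (hc : 0 < c) (hcd : c ≤ d) :
    (∑' i, x i ^ d) ^ (1 / d) ≤ (∑' i, x i ^ c) ^ (1 / c) := by
  have hd : 0 < d := hc.trans_le hcd
  set S := ∑' i, x i ^ c
  have hsum : ∑' i, x i ^ d ≤ S ^ (d / c) := calc
    ∑' i, x i ^ d = ∑' i, x i ^ c * x i ^ (d - c) := by
        refine tsum_congr fun i => ?_
        rw [← ENNReal.rpow_add_of_nonneg _ _ hc.le (sub_nonneg.mpr hcd), add_sub_cancel]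
    _ ≤ ∑' i, x i ^ c * (S ^ (1 / c)) ^ (d - c) := by
        gcongr with i
        exact le_tsum_rpow_one_div x hc i
    _ = S ^ (1 : ℝ) * S ^ (1 / c * (d - c)) := by
        rw [ENNReal.tsum_mul_right, ← ENNReal.rpow_mul, ENNReal.rpow_one]
    _ = S ^ (d / c) := by
        rw [← ENNReal.rpow_add_of_nonneg _ _ zero_le_one
          (mul_nonneg (one_div_nonneg.mpr hc.le) (sub_nonneg.mpr hcd))]
        congr 1; field_simp; ring
  calc (∑' i, x i ^ d) ^ (1 / d) ≤ (S ^ (d / c)) ^ (1 / d) := by gcongr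
    _ = S ^ (1 / c) := by rw [← ENNReal.rpow_mul]; congr 1; field_simp

lemma tsum_rpow_one_div_le_mul {x y : ι → ℝ≥0∞} {D : ℝ≥0∞} {c : ℝ} (hc : 0 < c)
    (h : ∀ i, x i ≤ D * y i) :
    (∑' i, x i ^ c) ^ (1 / c) ≤ D * (∑' i, y i ^ c) ^ (1 / c) := by
  have hsum : ∑' i, x i ^ c ≤ D ^ c * ∑' i, y i ^ c := by
    rw [← ENNReal.tsum_mul_left]
    refine ENNReal.tsum_le_tsum fun i => ?_
    rw [← ENNReal.mul_rpow_of_nonneg _ _ hc.le]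
    exact ENNReal.rpow_le_rpow (h i) hc.le
  calc (∑' i, x i ^ c) ^ (1 / c) ≤ (D ^ c * ∑' i, y i ^ c) ^ (1 / c) := by gcongr
    _ = D * (∑' i, y i ^ c) ^ (1 / c) := by
        rw [ENNReal.mul_rpow_of_nonneg _ _ (one_div_nonneg.mpr hc.le), ← ENNReal.rpow_mul,
          mul_one_div_cancel hc.ne', ENNReal.rpow_one]

lemma ofReal_rpow_mul_ofReal_div_rpow {r c : ℝ} (hr : 0 < r) (hc : 0 < c)
    (ρ a b₁ b₂ : ℝ) :
    ENNReal.ofReal (r ^ ρ) ^ (a - b₁) * ENNReal.ofReal ((r / c) ^ ρ) ^ (b₁ - b₂)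
      = ENNReal.ofReal ((1 / c) ^ (ρ * (b₁ - b₂))) * ENNReal.ofReal (r ^ ρ) ^ (a - b₂) := by
  have hrρ : 0 < r ^ ρ := Real.rpow_pos_of_pos hr ρ
  have hc' : 0 < 1 / c := one_div_pos.mpr hc
  rw [ENNReal.ofReal_rpow_of_pos hrρ, ENNReal.ofReal_rpow_of_pos hrρ,
    ENNReal.ofReal_rpow_of_pos (Real.rpow_pos_of_pos (div_pos hr hc) ρ),
    ← ENNReal.ofReal_mul (by positivity), ← ENNReal.ofReal_mul (by positivity)]
  congr 1
  rw [div_eq_mul_one_div r c, Real.mul_rpow hr.le hc'.le,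
    Real.mul_rpow hrρ.le (by positivity), ← mul_assoc, ← Real.rpow_add hrρ,
    ← Real.rpow_mul hc'.le]
  ring_nf

end ENNReal

section PartitionNorm

variable {X E : Type*} [MeasurableSpace X] [NormedAddCommGroup E] (μ : Measure X)

lemma eLpNorm_indicator_le_rpow_mul {A : Set X} (hA : MeasurableSet A) {m : ℝ≥0∞}
    (hAm : μ A ≤ m) {q₁ q₂ : ℝ≥0∞} (hq₁ : q₁ ≠ 0) (hq : q₁ ≤ q₂) {f : X → E}
    (hf : AEStronglyMeasurable f μ) :
    eLpNorm (A.indicator f) q₁ μ ≤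
      m ^ (q₁⁻¹.toReal - q₂⁻¹.toReal) * eLpNorm (A.indicator f) q₂ μ := by
  have hexp : 0 ≤ q₁⁻¹.toReal - q₂⁻¹.toReal :=
    sub_nonneg.mpr (ENNReal.toReal_mono (ENNReal.inv_ne_top.mpr hq₁) (ENNReal.inv_le_inv.mpr hq))
  have holder := eLpNorm_le_eLpNorm_mul_rpow_measure_univ hq (hf.restrict (s := A))
  rw [Measure.restrict_apply_univ] at holder
  simp only [one_div, ← ENNReal.toReal_inv] at holder
  rw [eLpNorm_indicator_eq_eLpNorm_restrict hA, eLpNorm_indicator_eq_eLpNorm_restrict hA, mul_comm]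
  exact holder.trans (by gcongr)

lemma partNorm_le_mul_partNorm {q₁ q₂ p₁ p₂ : ℝ≥0∞} (hp₂ : p₂ ≠ 0) (hp : p₂ ≤ p₁)
    {π : Set (Set X)} {D : ℝ≥0∞} {f : X → E}
    (hblock : ∀ A ∈ π, eLpNorm (A.indicator f) q₁ μ ≤ D * eLpNorm (A.indicator f) q₂ μ) :
    partNorm μ q₁ p₁ π f ≤ D * partNorm μ q₂ p₂ π f := by
  by_cases hp₂top : p₂ = ∞
  · rw [partNorm, if_pos (top_le_iff.mp (hp₂top ▸ hp)), partNorm, if_pos hp₂top]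
    refine iSup₂_le fun A hA => (hblock A hA).trans ?_
    gcongr
    exact le_iSup₂ (f := fun B (_ : B ∈ π) => eLpNorm (B.indicator f) q₂ μ) A hA
  have hp₂pos : 0 < p₂.toReal := ENNReal.toReal_pos hp₂ hp₂top
  rw [partNorm, partNorm, if_neg hp₂top]
  split_ifs with hp₁top
  · refine iSup₂_le fun A hA => (hblock A hA).trans ?_
    gcongr
    exact ENNReal.le_tsum_rpow_one_div (fun B : π => eLpNorm ((B : Set X).indicator f) q₂ μ)
      hp₂pos ⟨A, hA⟩
  · calc (∑' A : π, eLpNorm ((A : Set X).indicator f) q₁ μ ^ p₁.toReal) ^ (1 / p₁.toReal)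
        ≤ (∑' A : π, eLpNorm ((A : Set X).indicator f) q₁ μ ^ p₂.toReal) ^ (1 / p₂.toReal) :=
          ENNReal.tsum_rpow_one_div_le_of_le _ hp₂pos
            ((ENNReal.toReal_le_toReal hp₂top hp₁top).mpr hp)
      _ ≤ D * (∑' A : π, eLpNorm ((A : Set X).indicator f) q₂ μ ^ p₂.toReal) ^ (1 / p₂.toReal) :=
          ENNReal.tsum_rpow_one_div_le_mul hp₂pos fun A => hblock A A.2

lemma iSup_eLpNorm_indicator_top_eq {π : Set (Set X)} (hπ : π.Countable) (hcover : ⋃₀ π = univ) (f : X → E) :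
    ⨆ A ∈ π, eLpNorm (A.indicator f) ∞ μ = eLpNorm f ∞ μ := by
  have := hπ.to_subtype
  refine le_antisymm (iSup₂_le fun A _ => eLpNorm_indicator_le f) ?_
  have hae : ∀ᵐ x ∂μ, ∀ A : π,
      ‖(A : Set X).indicator f x‖ₑ ≤ eLpNorm ((A : Set X).indicator f) ∞ μ :=
    ae_all_iff.mpr fun A => by
      simpa only [eLpNorm_exponent_top] using enorm_ae_le_eLpNormEssSup _ μ
  rw [eLpNorm_exponent_top]
  refine essSup_le_of_ae_le _ (hae.mono fun x hx => ?_)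
  obtain ⟨A, hAπ, hxA⟩ := mem_sUnion.mp (hcover ▸ mem_univ x)
  calc ‖f x‖ₑ = ‖A.indicator f x‖ₑ := by rw [indicator_of_mem hxA]
    _ ≤ eLpNorm (A.indicator f) ∞ μ := hx ⟨A, hAπ⟩
    _ ≤ ⨆ B ∈ π, eLpNorm (B.indicator f) ∞ μ :=
        le_iSup₂ (f := fun B (_ : B ∈ π) => eLpNorm (B.indicator f) ∞ μ) A hAπ

lemma tsum_eLpNorm_indicator_rpow_eq {π : Set (Set X)} {q : ℝ≥0∞} (hq : q ≠ 0) (hqtop : q ≠ ∞)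
    (hπ : π.Countable) (hmeas : ∀ A ∈ π, MeasurableSet A) (hdisj : π.PairwiseDisjoint id)
    (hcover : ⋃₀ π = univ) (f : X → E) :
    ∑' A : π, eLpNorm ((A : Set X).indicator f) q μ ^ q.toReal = eLpNorm f q μ ^ q.toReal := by
  have := hπ.to_subtype
  have hqpos : 0 < q.toReal := ENNReal.toReal_pos hq hqtop
  have hpow : ∀ (ν : Measure X) (g : X → E),
      eLpNorm g q ν ^ q.toReal = ∫⁻ x, ‖g x‖ₑ ^ q.toReal ∂ν := fun ν g => by
    rw [eLpNorm_eq_eLpNorm' hq hqtop, ← lintegral_rpow_enorm_eq_rpow_eLpNorm' hqpos]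
  calc ∑' A : π, eLpNorm ((A : Set X).indicator f) q μ ^ q.toReal
      = ∑' A : π, ∫⁻ x in A, ‖f x‖ₑ ^ q.toReal ∂μ := tsum_congr fun A => by
        rw [eLpNorm_indicator_eq_eLpNorm_restrict (hmeas A A.2), hpow]
    _ = ∫⁻ x in ⋃ A : π, A, ‖f x‖ₑ ^ q.toReal ∂μ := (lintegral_iUnion (fun A : π => hmeas A A.2)
        (fun A B hAB => hdisj A.2 B.2 (Subtype.coe_injective.ne hAB)) _).symm
    _ = eLpNorm f q μ ^ q.toReal := by
        rw [← sUnion_eq_iUnion, hcover, Measure.restrict_univ, hpow]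

lemma partNorm_self_eq_eLpNorm {π : Set (Set X)} {q : ℝ≥0∞} (hq : q ≠ 0) (hπ : π.Countable)
    (hmeas : ∀ A ∈ π, MeasurableSet A) (hdisj : π.PairwiseDisjoint id) (hcover : ⋃₀ π = univ)
    (f : X → E) :
    partNorm μ q q π f = eLpNorm f q μ := by
  rw [partNorm]
  split_ifs with hqtop
  · subst hqtop
    exact iSup_eLpNorm_indicator_top_eq μ hπ hcover f
  · rw [tsum_eLpNorm_indicator_rpow_eq μ hq hqtop hπ hmeas hdisj hcover, ← ENNReal.rpow_mul,
      mul_one_div_cancel (ENNReal.toReal_pos hq hqtop).ne', ENNReal.rpow_one]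

end PartitionNorm

section QuasiNormedGroup

variable {H : Type*} [Group H]

lemma gball_one_mul_gball_one_subset {nm : H → ℝ} {γ : ℝ} (hγ : 0 < γ)
    (hnm_mul : ∀ x y : H, nm (x * y) ≤ γ * (nm x + nm y)) (t : ℝ) :
    gball nm 1 t * gball nm 1 t ⊆ gball nm 1 (2 * γ * t) := by
  rintro _ ⟨u, hu, v, hv, rfl⟩
  simp only [gball, mem_ofPred_eq, inv_one, one_mul] at hu hv ⊢
  calc nm (u * v) ≤ γ * (nm u + nm v) := hnm_mul u v
    _ < 2 * γ * t := by nlinarith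

variable [MeasurableSpace H]

lemma IsUniformPartition.measure_le [MeasurableMul H] {μ : Measure H} [μ.IsMulLeftInvariant]
    {π : Set (Set H)} {U V : Set H} (hπ : IsUniformPartition π U V) {A : Set H} (hA : A ∈ π) :
    μ A ≤ μ V := by
  obtain ⟨x, -, -, hAV⟩ := hπ.2.2.2.2 A hA
  exact (measure_mono hAV).trans_eq (measure_smul μ x V)

lemma alphaNorm_le_mul_alphaNorm [MeasurableMul H] (μ : Measure H) [μ.IsMulLeftInvariant]
    {nm : H → ℝ} {γ ρ : ℝ} (hγ : 0 < γ) (hnm_mul : ∀ x y : H, nm (x * y) ≤ γ * (nm x + nm y))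
    (hvol : ∀ r : ℝ, 0 < r → μ (gball nm 1 r) = ENNReal.ofReal (r ^ ρ))
    {πr : ℝ → Set (Set H)}
    (hπr : ∀ r : ℝ, 0 < r → IsUniformPartition (πr r)
      (gball nm 1 (r / (4 * γ ^ 2)))
      (gball nm 1 (r / (4 * γ ^ 2)) * gball nm 1 (r / (4 * γ ^ 2))))
    {q₁ q₂ p₁ p₂ α : ℝ≥0∞} (hq₁ : q₁ ≠ 0) (hq : q₁ ≤ q₂) (hp₂ : p₂ ≠ 0) (hp : p₂ ≤ p₁)
    {E : Type*} [NormedAddCommGroup E] {f : H → E} (hf : AEStronglyMeasurable f μ) :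
    alphaNorm μ nm πr q₁ p₁ α f ≤
      ENNReal.ofReal ((1 / (2 * γ)) ^ (ρ * (q₁⁻¹.toReal - q₂⁻¹.toReal))) *
        alphaNorm μ nm πr q₂ p₂ α f := by
  set C := ENNReal.ofReal ((1 / (2 * γ)) ^ (ρ * (q₁⁻¹.toReal - q₂⁻¹.toReal)))
  refine iSup₂_le fun r hr => ?_
  have h2γ : 0 < 2 * γ := by positivity
  have hblock : ∀ A ∈ πr r, μ A ≤ ENNReal.ofReal ((r / (2 * γ)) ^ ρ) := fun A hA => calc
    μ A ≤ μ (gball nm 1 (r / (4 * γ ^ 2)) * gball nm 1 (r / (4 * γ ^ 2))) :=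
        (hπr r hr).measure_le hA
    _ ≤ μ (gball nm 1 (r / (2 * γ))) := by
        refine measure_mono ((gball_one_mul_gball_one_subset hγ hnm_mul _).trans_eq ?_)
        congr 1; field_simp; ring
    _ = ENNReal.ofReal ((r / (2 * γ)) ^ ρ) := hvol _ (div_pos hr h2γ)
  have hpart := partNorm_le_mul_partNorm μ hp₂ hp fun A hA =>
    eLpNorm_indicator_le_rpow_mul μ ((hπr r hr).2.1 A hA) (hblock A hA) hq₁ hq hf
  calc μ (gball nm 1 r) ^ (α⁻¹.toReal - q₁⁻¹.toReal) * partNorm μ q₁ p₁ (πr r) f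
      ≤ μ (gball nm 1 r) ^ (α⁻¹.toReal - q₁⁻¹.toReal) *
          (ENNReal.ofReal ((r / (2 * γ)) ^ ρ) ^ (q₁⁻¹.toReal - q₂⁻¹.toReal) *
            partNorm μ q₂ p₂ (πr r) f) := mul_le_mul_right hpart _
    _ = C * (μ (gball nm 1 r) ^ (α⁻¹.toReal - q₂⁻¹.toReal) * partNorm μ q₂ p₂ (πr r) f) := by
        rw [← mul_assoc, ← mul_assoc, hvol r hr,
          ENNReal.ofReal_rpow_mul_ofReal_div_rpow hr h2γ]
    _ ≤ C * alphaNorm μ nm πr q₂ p₂ α f := by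
        gcongr
        exact le_iSup₂ (f := fun s (_ : 0 < s) =>
          μ (gball nm 1 s) ^ (α⁻¹.toReal - q₂⁻¹.toReal) * partNorm μ q₂ p₂ (πr s) f) r hr

lemma alphaNorm_self_eq_eLpNorm (μ : Measure H) (nm : H → ℝ) {πr : ℝ → Set (Set H)}
    {U V : ℝ → Set H} (hπr : ∀ r : ℝ, 0 < r → IsUniformPartition (πr r) (U r) (V r))
    {q : ℝ≥0∞} (hq : q ≠ 0) {E : Type*} [NormedAddCommGroup E] (f : H → E) :
    alphaNorm μ nm πr q q q f = eLpNorm f q μ := by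
  have hpart : ∀ r, 0 < r → partNorm μ q q (πr r) f = eLpNorm f q μ := fun r hr =>
    have ⟨hπ, hmeas, hdisj, hcover, _⟩ := hπr r hr
    partNorm_self_eq_eLpNorm μ hq hπ hmeas hdisj hcover f
  simp only [alphaNorm, sub_self, ENNReal.rpow_zero, one_mul]
  refine le_antisymm (iSup₂_le fun r hr => (hpart r hr).le) ?_
  rw [← hpart 1 one_pos]
  exact le_iSup₂ (f := fun r (_ : 0 < r) => partNorm μ q q (πr r) f) 1 one_pos

end QuasiNormedGroup

set_option linter.unusedSectionVars false

theorem statement12_general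
    (μ : Measure G) [μ.IsHaarMeasure]
    (nm : G → ℝ) (γ ρ : ℝ)
    (hγ : 1 ≤ γ)
    (hnm_mul : ∀ x y : G, nm (x * y) ≤ γ * (nm x + nm y))
    (hvol : ∀ r : ℝ, 0 < r → μ (gball nm 1 r) = ENNReal.ofReal (r ^ ρ))
    (πr : ℝ → Set (Set G))
    (hπr : ∀ r : ℝ, 0 < r → IsUniformPartition (πr r)
      (gball nm 1 (r / (4 * γ ^ 2)))
      (gball nm 1 (r / (4 * γ ^ 2)) * gball nm 1 (r / (4 * γ ^ 2))))
   (q₁ q₂ p₁ p₂ α : ℝ≥0∞)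
    (h1 : 1 ≤ q₁) (h2 : q₁ ≤ q₂) (h3 : q₂ ≤ α) (h4 : α ≤ p₂) (h5 : p₂ ≤ p₁) :
    (∀ f : G → ℂ, AEStronglyMeasurable f μ →
        alphaNorm μ nm πr q₁ p₁ α f ≤
          ENNReal.ofReal ((1 / (2 * γ)) ^ (ρ * (q₁⁻¹.toReal - q₂⁻¹.toReal))) *
            alphaNorm μ nm πr q₂ p₂ α f) ∧
    (∀ f : G → ℂ, AEStronglyMeasurable f μ →
        alphaNorm μ nm πr q₁ q₁ q₁ f = eLpNorm f q₁ μ) ∧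
    ∀ f : G → ℂ, AEStronglyMeasurable f μ →
      alphaNorm μ nm πr q₂ p₂ α f < ∞ → alphaNorm μ nm πr q₁ p₁ α f < ∞ := by
  have hq₁ : q₁ ≠ 0 := (zero_lt_one.trans_le h1).ne'
  have hp₂ : p₂ ≠ 0 := (zero_lt_one.trans_le (h1.trans (h2.trans (h3.trans h4)))).ne'
  have hmono := fun (f : G → ℂ) (hf : AEStronglyMeasurable f μ) =>
    alphaNorm_le_mul_alphaNorm μ (zero_lt_one.trans_le hγ) hnm_mul hvol hπr hq₁ h2 hp₂ h5
      (α := α) hf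
  exact ⟨hmono, fun f _ => alphaNorm_self_eq_eLpNorm μ nm hπr hq₁ f,
    fun f hf hfin => (hmono f hf).trans_lt (ENNReal.mul_lt_top ENNReal.ofReal_lt_top hfin)⟩

theorem statement12
    (μ : Measure G) [μ.IsHaarMeasure]
    (nm : G → ℝ) (γ ρ : ℝ)
    (hnm_cont : Continuous nm)
    (hnm_nonneg : ∀ x : G, 0 ≤ nm x)
    (hnm_zero : ∀ x : G, nm x = 0 ↔ x = 1)
    (hnm_inv : ∀ x : G, nm x⁻¹ = nm x)
    (hγ : 1 ≤ γ)
    (hnm_mul : ∀ x y : G, nm (x * y) ≤ γ * (nm x + nm y))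
    (hball_cpt : ∀ (x : G) (r : ℝ), 0 < r → IsCompact (closure (gball nm x r)))
    (hρ : 0 < ρ)
    (hvol : ∀ r : ℝ, 0 < r → μ (gball nm 1 r) = ENNReal.ofReal (r ^ ρ))
    (πr : ℝ → Set (Set G))
    (hπr : ∀ r : ℝ, 0 < r → IsUniformPartition (πr r)
      (gball nm 1 (r / (4 * γ ^ 2)))
      (gball nm 1 (r / (4 * γ ^ 2)) * gball nm 1 (r / (4 * γ ^ 2))))
   (q₁ q₂ p₁ p₂ α : ℝ≥0∞)
    (h1 : 1 ≤ q₁) (h2 : q₁ ≤ q₂) (h3 : q₂ ≤ α) (h4 : α ≤ p₂) (h5 : p₂ ≤ p₁) :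
    (∀ f : G → ℂ, AEStronglyMeasurable f μ →
        alphaNorm μ nm πr q₁ p₁ α f ≤
          ENNReal.ofReal ((1 / (2 * γ)) ^ (ρ * (q₁⁻¹.toReal - q₂⁻¹.toReal))) *
            alphaNorm μ nm πr q₂ p₂ α f) ∧
    (∀ f : G → ℂ, AEStronglyMeasurable f μ →
        alphaNorm μ nm πr q₁ q₁ q₁ f = eLpNorm f q₁ μ) ∧
    ∀ f : G → ℂ, AEStronglyMeasurable f μ →
      alphaNorm μ nm πr q₂ p₂ α f < ∞ → alphaNorm μ nm πr q₁ p₁ α f < ∞ :=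
  statement12_general μ nm γ ρ hγ hnm_mul hvol πr hπr q₁ q₂ p₁ p₂ α h1 h2 h3 h4 h5
end

section
/- Let (q,p,α) ∈ [1,∞]³ with q < α < p. There exists a constant C = C(q,p,α,ρ,γ) > 0 such that for every measurable function f on G: ‖f‖_{q,p,α} ≤ C·‖f‖*_{α,∞}. Consequently the weak Lorentz space L^{α,∞}(G) is contained in (L^q,L^p)^α(G). -/
open MeasureTheory ENNReal NNReal Set Filter Topology Pointwise

variable {G : Type*} [Group G] [TopologicalSpace G] [IsTopologicalGroup G]
  [T2Space G] [LocallyCompactSpace G] [SigmaCompactSpace G]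
  [MeasurableSpace G] [BorelSpace G]

/-!
If `‖f‖*_{α,∞} = W` then `μ {‖f‖ > s} ≤ (W / s) ^ α`. By the layer cake formula, cut at the
height where this bound meets the trivial bound `μ S`, the `L^q`-mass of `f` on a set `S` is at
most `C W^q (μ S)^(1 - q/α)` when `q < α`. Every cell of `π_r` has measure at most `λ(B(e,r))`,
so each `‖f χ_E‖_q` is at most `A = C W λ(B(e,r))^(1/q - 1/α)`, which settles `p = ∞`. The same
estimate on a union of `N` cells with `‖f χ_E‖_q > t` gives `N ≤ (A / t)^α`: the cell norms form
a weak-`ℓ^α` sequence bounded by `A`, and the layer cake formula for the counting measure bounds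
its `ℓ^p` norm by `C A` when `p > α`.
-/

lemma lintegral_Ioi_ofReal_rpow_neg {b t₀ : ℝ} (hb : 1 < b) (ht₀ : 0 < t₀) :
    ∫⁻ t in Ioi t₀, ENNReal.ofReal (t ^ (-b)) = ENNReal.ofReal (t₀ ^ (1 - b) / (b - 1)) := by
  rw [← ofReal_integral_eq_lintegral_ofReal (integrableOn_Ioi_rpow_of_lt (by linarith) ht₀)
    ((ae_restrict_mem measurableSet_Ioi).mono fun t ht => Real.rpow_nonneg (ht₀.trans ht).le _),
    integral_Ioi_rpow_of_lt (by linarith) ht₀]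
  congr 1
  rw [neg_div, ← div_neg]
  ring_nf

lemma lintegral_Ioc_ofReal_rpow {c d : ℝ} (hc : -1 < c) (hd : 0 ≤ d) :
    ∫⁻ t in Ioc 0 d, ENNReal.ofReal (t ^ c) = ENNReal.ofReal (d ^ (c + 1) / (c + 1)) := by
  rw [← ofReal_integral_eq_lintegral_ofReal (intervalIntegral.intervalIntegrable_rpow' hc).1
    ((ae_restrict_mem measurableSet_Ioc).mono fun t ht => Real.rpow_nonneg ht.1.le _),
    ← intervalIntegral.integral_of_le hd, integral_rpow (Or.inl hc),
    Real.zero_rpow (by linarith), sub_zero]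

lemma tsum_rpow_eq_lintegral_encard_mul {ι : Type*} {b : ι → ℝ≥0∞} (hb : ∀ i, b i ≠ ∞)
    {P : ℝ} (hP : 0 < P) :
    ∑' i, b i ^ P = ENNReal.ofReal P * ∫⁻ t in Ioi 0,
      ({i | ENNReal.ofReal t < b i}.encard : ℝ≥0∞) * ENNReal.ofReal (t ^ (P - 1)) := by
  let _ : MeasurableSpace ι := ⊤
  have hcount : ∀ t ∈ Ioi (0 : ℝ),
      Measure.count {i | t < (b i).toReal} = ({i | ENNReal.ofReal t < b i}.encard : ℝ≥0∞) := by
    intro t ht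
    rw [Measure.count_apply MeasurableSpace.measurableSet_top]
    congr 3; ext i
    exact (ENNReal.ofReal_lt_iff_lt_toReal (le_of_lt ht) (hb i)).symm
  rw [setLIntegral_congr_fun measurableSet_Ioi (g := fun t =>
      Measure.count {i | t < (b i).toReal} * ENNReal.ofReal (t ^ (P - 1)))
      fun t ht => by simp only [hcount t ht],
    ← lintegral_rpow_eq_lintegral_meas_lt_mul Measure.count (ae_of_all _ fun i => toReal_nonneg)
      measurable_from_top.aemeasurable hP, ← lintegral_count]
  refine lintegral_congr fun i => ?_
  rw [← ENNReal.ofReal_rpow_of_nonneg toReal_nonneg hP.le, ENNReal.ofReal_toReal (hb i)]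

lemma tsum_rpow_le_of_encard_lt_le {ι : Type*} {b : ι → ℝ≥0∞} {D : ℝ≥0∞} (hD : D ≠ ∞)
    {r P : ℝ} (hr : 0 < r) (hrP : r < P) (hbD : ∀ i, b i ≤ D)
    (hcount : ∀ t ≠ 0, ({i | t < b i}.encard : ℝ≥0∞) ≤ (D / t) ^ r) :
    ∑' i, b i ^ P ≤ ENNReal.ofReal (P / (P - r)) * D ^ P := by
  have hP : 0 < P := hr.trans hrP
  obtain ⟨d, hd, rfl⟩ : ∃ d : ℝ, 0 ≤ d ∧ ENNReal.ofReal d = D :=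
    ⟨D.toReal, toReal_nonneg, ENNReal.ofReal_toReal hD⟩
  have hhead : ∀ t ∈ Ioc 0 d,
      ({i | ENNReal.ofReal t < b i}.encard : ℝ≥0∞) * ENNReal.ofReal (t ^ (P - 1))
        ≤ ENNReal.ofReal d ^ r * ENNReal.ofReal (t ^ (P - r - 1)) := by
    rintro t ⟨ht, -⟩
    calc _ ≤ (ENNReal.ofReal d / ENNReal.ofReal t) ^ r * ENNReal.ofReal (t ^ (P - 1)) :=
          mul_le_mul_left (hcount _ (ENNReal.ofReal_pos.2 ht).ne') _
      _ = ENNReal.ofReal d ^ r * ENNReal.ofReal (t ^ (P - r - 1)) := by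
        rw [ENNReal.div_rpow_of_nonneg _ _ hr.le, ENNReal.ofReal_rpow_of_pos ht, div_eq_mul_inv,
          ← ENNReal.ofReal_inv_of_pos (Real.rpow_pos_of_pos ht _), mul_assoc,
          ← ENNReal.ofReal_mul (by positivity), ← Real.rpow_neg ht.le, ← Real.rpow_add ht]
        ring_nf
  have htail : ∀ t ∈ Ioi d, {i | ENNReal.ofReal t < b i}.encard = 0 := fun t ht =>
    Set.encard_eq_zero.2 <| eq_empty_of_forall_notMem fun i hi =>
      ((ENNReal.ofReal_lt_ofReal_iff (hd.trans_lt ht)).2 ht).not_ge ((hbD i).trans_lt' hi).le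
  rw [tsum_rpow_eq_lintegral_encard_mul (fun i => ne_top_of_le_ne_top hD (hbD i)) hP,
    ← Ioc_union_Ioi_eq_Ioi hd, lintegral_union measurableSet_Ioi Ioc_disjoint_Ioi_same,
    setLIntegral_congr_fun measurableSet_Ioi (g := fun _ => 0) fun t ht => by simp [htail t ht],
    lintegral_zero, add_zero]
  calc _ ≤ ENNReal.ofReal P *
        ∫⁻ t in Ioc 0 d, ENNReal.ofReal d ^ r * ENNReal.ofReal (t ^ (P - r - 1)) :=
        mul_le_mul_right (setLIntegral_mono' measurableSet_Ioc hhead) _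
    _ = ENNReal.ofReal (P / (P - r)) * ENNReal.ofReal d ^ P := by
      rw [lintegral_const_mul' _ _ (ENNReal.rpow_ne_top_of_nonneg hr.le hD),
        lintegral_Ioc_ofReal_rpow (by linarith) hd, ENNReal.ofReal_rpow_of_nonneg hd hr.le,
        ENNReal.ofReal_rpow_of_nonneg hd hP.le, ← ENNReal.ofReal_mul (by positivity),
        ← ENNReal.ofReal_mul hP.le, ← ENNReal.ofReal_mul (by positivity)]
      congr 1
      rw [show P - r - 1 + 1 = P - r by ring, mul_div_assoc', ← Real.rpow_add' hd (by linarith)]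
      field_simp
      ring_nf

lemma Set.encard_le_of_forall_finset {ι : Type*} {s : Set ι} {c : ℝ≥0∞}
    (h : ∀ F : Finset ι, ↑F ⊆ s → (F.card : ℝ≥0∞) ≤ c) : (s.encard : ℝ≥0∞) ≤ c := by
  rcases s.finite_or_infinite with hs | hs
  · simpa [hs.encard_eq_coe_toFinset_card] using h hs.toFinset (by simp)
  rcases eq_or_ne c ∞ with rfl | hc
  · exact le_top
  obtain ⟨n, hn⟩ := ENNReal.exists_nat_gt hc
  obtain ⟨F, hF, rfl⟩ := hs.exists_subset_card_eq n
  exact absurd (h F hF) hn.not_ge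

lemma ENNReal.le_div_rpow_inv_of_mul_le_mul_rpow {n t D : ℝ≥0∞} {θ : ℝ} (hθ : 0 < θ)
    (hn : n ≠ ∞) (ht : t ≠ 0) (hD : D ≠ ∞) (h : n * t ≤ D * n ^ (1 - θ)) :
    n ≤ (D / t) ^ θ⁻¹ := by
  rcases eq_or_ne n 0 with rfl | hn₀
  · exact zero_le
  have hsplit : n = n ^ θ * n ^ (1 - θ) := by
    rw [← ENNReal.rpow_add _ _ hn₀ hn, add_sub_cancel, ENNReal.rpow_one]
  have h' : n ^ θ * t ≤ D := by
    refine (ENNReal.mul_le_mul_iff_left (c := n ^ (1 - θ))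
      (by simp [hn₀, hn]) (by simp [hn₀, hn])).1 ?_
    rwa [mul_right_comm, ← hsplit]
  exact (ENNReal.le_rpow_inv_iff hθ).2 ((ENNReal.le_div_iff_mul_le (Or.inl ht) (Or.inr hD)).2 h')

lemma meas_lt_enorm_le_weakNorm_div_rpow {X : Type*} [MeasurableSpace X] {μ : Measure X}
    {α : ℝ≥0∞} (hα₀ : α ≠ 0) (hα : α ≠ ∞) (f : X → ℂ) {s : ℝ≥0∞} (hs : s ≠ 0) :
    μ {x | s < ‖f x‖ₑ} ≤ (weakNorm μ α f / s) ^ α.toReal := by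
  rcases eq_or_ne s ∞ with rfl | hs'
  · simp
  by_contra! hlt
  obtain ⟨t, hWt, htμ⟩ := exists_between hlt
  have hs_le : s ≤ rearr μ f t := le_sInf fun u ⟨_, hu⟩ => by
    by_contra! hus
    exact htμ.not_ge ((measure_mono fun x hx => hus.trans hx).trans hu)
  have hW : t ^ α⁻¹.toReal * rearr μ f t ≤ weakNorm μ α f :=
    le_iSup₂_of_le t (pos_of_gt hWt) (le_iSup_of_le htμ.ne_top le_rfl)
  rw [ENNReal.toReal_inv] at hW
  have ht : t ^ α.toReal⁻¹ ≤ weakNorm μ α f / s :=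
    (ENNReal.le_div_iff_mul_le (Or.inl hs) (Or.inl hs')).2 ((mul_le_mul_right hs_le _).trans hW)
  exact hWt.not_ge ((ENNReal.rpow_inv_le_iff (ENNReal.toReal_pos hα₀ hα)).1 ht)

section WeakType

open Function

variable {X E : Type*} [MeasurableSpace X] [NormedAddCommGroup E] {μ : Measure X} {f : X → E}
  {q a : ℝ} {W : ℝ≥0∞}

lemma meas_lt_norm_rpow_le (hq : 0 < q) (ha : 0 ≤ a)
    (hdist : ∀ s ≠ 0, μ {x | s < ‖f x‖ₑ} ≤ (W / s) ^ a) {t : ℝ} (ht : 0 < t) :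
    μ {x | t < ‖f x‖ ^ q} ≤ W ^ a * ENNReal.ofReal (t ^ (-(a / q))) := by
  have hroot : 0 < t ^ q⁻¹ := Real.rpow_pos_of_pos ht _
  calc μ {x | t < ‖f x‖ ^ q} ≤ μ {x | ENNReal.ofReal (t ^ q⁻¹) < ‖f x‖ₑ} := by
        refine measure_mono fun x hx => ?_
        have hlt := (Real.rpow_inv_lt_iff_of_pos ht.le (norm_nonneg _) hq).2 hx
        rw [mem_ofPred_eq, ← ofReal_norm]
        exact (ENNReal.ofReal_lt_ofReal_iff (hroot.trans hlt)).2 hlt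
    _ ≤ (W / ENNReal.ofReal (t ^ q⁻¹)) ^ a := hdist _ (ENNReal.ofReal_pos.2 hroot).ne'
    _ = W ^ a * ENNReal.ofReal (t ^ (-(a / q))) := by
        rw [ENNReal.div_rpow_of_nonneg _ _ ha, div_eq_mul_inv, ENNReal.ofReal_rpow_of_pos hroot,
          ← ENNReal.ofReal_inv_of_pos (Real.rpow_pos_of_pos hroot _), ← Real.rpow_mul ht.le,
          ← Real.rpow_neg ht.le, inv_mul_eq_div]

lemma setLIntegral_enorm_rpow_eq_lintegral_meas_lt (hf : AEStronglyMeasurable f μ) (hq : 0 < q)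
    (S : Set X) :
    ∫⁻ x in S, ‖f x‖ₑ ^ q ∂μ = ∫⁻ t in Ioi (0 : ℝ), μ.restrict S {x | t < ‖f x‖ ^ q} := by
  rw [← lintegral_eq_lintegral_meas_lt _ (ae_of_all _ fun x => by positivity)
    (hf.norm.aemeasurable.pow_const q).restrict]
  refine lintegral_congr fun x => ?_
  rw [← ofReal_norm, ENNReal.ofReal_rpow_of_nonneg (norm_nonneg _) hq.le]

lemma setLIntegral_enorm_rpow_le_add (hf : AEStronglyMeasurable f μ) (hq : 0 < q) (hqa : q < a)
    (hdist : ∀ s ≠ 0, μ {x | s < ‖f x‖ₑ} ≤ (W / s) ^ a)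
    {S : Set X} {M : ℝ≥0∞} (hSM : μ S ≤ M) {t₀ : ℝ} (ht₀ : 0 < t₀) :
    ∫⁻ x in S, ‖f x‖ₑ ^ q ∂μ
      ≤ M * ENNReal.ofReal t₀ + W ^ a * ENNReal.ofReal (t₀ ^ (1 - a / q) / (a / q - 1)) := by
  have ha : 0 < a := hq.trans hqa
  rw [setLIntegral_enorm_rpow_eq_lintegral_meas_lt hf hq, ← Ioc_union_Ioi_eq_Ioi ht₀.le,
    lintegral_union measurableSet_Ioi Ioc_disjoint_Ioi_same]
  gcongr
  · calc _ ≤ ∫⁻ _ in Ioc 0 t₀, M := lintegral_mono fun t =>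
          (measure_mono (subset_univ _)).trans (by rwa [Measure.restrict_apply_univ])
      _ = _ := by rw [setLIntegral_const, Real.volume_Ioc, sub_zero]
  · calc _ ≤ ∫⁻ t in Ioi t₀, W ^ a * ENNReal.ofReal (t ^ (-(a / q))) :=
          setLIntegral_mono' measurableSet_Ioi fun t ht => (Measure.restrict_le_self _).trans
            (meas_lt_norm_rpow_le hq ha.le hdist (ht₀.trans ht))
      _ = _ := by
        rw [lintegral_const_mul _ (by fun_prop),
          lintegral_Ioi_ofReal_rpow_neg ((one_lt_div hq).2 hqa) ht₀]

lemma setLIntegral_enorm_rpow_le (hf : AEStronglyMeasurable f μ) (hq : 0 < q) (hqa : q < a)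
    (hW : W ≠ ∞) (hdist : ∀ s ≠ 0, μ {x | s < ‖f x‖ₑ} ≤ (W / s) ^ a)
    {S : Set X} {M : ℝ≥0∞} (hSM : μ S ≤ M) (hM : M ≠ ∞) :
    ∫⁻ x in S, ‖f x‖ₑ ^ q ∂μ ≤ ENNReal.ofReal (a / (a - q)) * W ^ q * M ^ (1 - q / a) := by
  have ha : 0 < a := hq.trans hqa
  rcases eq_or_ne W 0 with rfl | hW₀
  · rw [setLIntegral_enorm_rpow_eq_lintegral_meas_lt hf hq]
    refine (setLIntegral_mono' measurableSet_Ioi fun t ht => (Measure.restrict_le_self _).trans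
      (meas_lt_norm_rpow_le hq ha.le hdist ht)).trans_eq ?_
    simp [ENNReal.zero_rpow_of_pos ha, hq]
  rcases eq_or_ne M 0 with rfl | hM₀
  · simp [Measure.restrict_eq_zero.2 (nonpos_iff_eq_zero.1 hSM)]
  obtain ⟨w, hw, rfl⟩ : ∃ w : ℝ, 0 < w ∧ ENNReal.ofReal w = W :=
    ⟨W.toReal, ENNReal.toReal_pos hW₀ hW, ENNReal.ofReal_toReal hW⟩
  obtain ⟨m, hm, rfl⟩ : ∃ m : ℝ, 0 < m ∧ ENNReal.ofReal m = M :=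
    ⟨M.toReal, ENNReal.toReal_pos hM₀ hM, ENNReal.ofReal_toReal hM⟩
  have hb : 0 < a / q - 1 := sub_pos.2 ((one_lt_div hq).2 hqa)
  -- the height at which the bounds `M` and `W ^ a * t ^ (-(a / q))` on `μ {t < ‖f‖ ^ q}` meet
  set t₀ := w ^ q * m ^ (-(q / a))
  refine (setLIntegral_enorm_rpow_le_add hf hq hqa hdist hSM (t₀ := t₀) (by positivity)).trans_eq ?_
  have e1 : m * t₀ = w ^ q * m ^ (1 - q / a) := by
    simp only [t₀, Real.rpow_sub hm, Real.rpow_one, Real.rpow_neg hm.le]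
    ring
  have e2 : w ^ a * t₀ ^ (1 - a / q) = w ^ q * m ^ (1 - q / a) := by
    rw [Real.mul_rpow (by positivity) (by positivity), ← Real.rpow_mul hw.le,
      ← Real.rpow_mul hm.le, ← mul_assoc, ← Real.rpow_add hw]
    congr 2 <;> field_simp <;> ring
  rw [ENNReal.ofReal_rpow_of_pos hw, ENNReal.ofReal_rpow_of_pos hw, ENNReal.ofReal_rpow_of_pos hm,
    ← ENNReal.ofReal_mul hm.le, ← ENNReal.ofReal_mul (by positivity),
    ← ENNReal.ofReal_add (by positivity)
      (mul_nonneg (by positivity) (div_nonneg (by positivity) hb.le)),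
    ← ENNReal.ofReal_mul (by positivity), ← ENNReal.ofReal_mul (by positivity), e1,
    ← mul_div_assoc, e2]
  congr 1
  have : a - q ≠ 0 := (sub_pos.2 hqa).ne'
  have : a / q - 1 ≠ 0 := hb.ne'
  field_simp
  ring

lemma encard_lt_setLIntegral_le (hf : AEStronglyMeasurable f μ) (hq : 0 < q) (hqa : q < a)
    (hW : W ≠ ∞) (hdist : ∀ s ≠ 0, μ {x | s < ‖f x‖ₑ} ≤ (W / s) ^ a)
    {ι : Type*} {s : ι → Set X} (hs : ∀ i, MeasurableSet (s i)) (hdisj : Pairwise (Disjoint on s))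
    {m : ℝ≥0∞} (hm : m ≠ ∞) (hsm : ∀ i, μ (s i) ≤ m) {t : ℝ≥0∞} (ht : t ≠ 0) :
    ({i | t < ∫⁻ x in s i, ‖f x‖ₑ ^ q ∂μ}.encard : ℝ≥0∞)
      ≤ (ENNReal.ofReal (a / (a - q)) * W ^ q * m ^ (1 - q / a) / t) ^ (a / q) := by
  have hθ : 0 < q / a := div_pos hq (hq.trans hqa)
  have hθ₁ : 0 ≤ 1 - q / a := sub_nonneg.2 ((div_le_one (hq.trans hqa)).2 hqa.le)
  rw [← inv_div q a]
  refine Set.encard_le_of_forall_finset fun F hF => ?_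
  refine ENNReal.le_div_rpow_inv_of_mul_le_mul_rpow hθ (ENNReal.natCast_ne_top _) ht
    (ENNReal.mul_ne_top (ENNReal.mul_ne_top ENNReal.ofReal_ne_top
      (ENNReal.rpow_ne_top_of_nonneg hq.le hW)) (ENNReal.rpow_ne_top_of_nonneg hθ₁ hm)) ?_
  calc (F.card : ℝ≥0∞) * t = ∑ _i ∈ F, t := by rw [Finset.sum_const, nsmul_eq_mul]
    _ ≤ ∑ i ∈ F, ∫⁻ x in s i, ‖f x‖ₑ ^ q ∂μ :=
        Finset.sum_le_sum fun i hi => (hF (Finset.mem_coe.2 hi)).le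
    _ = ∫⁻ x in ⋃ i ∈ F, s i, ‖f x‖ₑ ^ q ∂μ :=
        (lintegral_biUnion_finset (hdisj.set_pairwise _) (fun i _ => hs i) _).symm
    _ ≤ ENNReal.ofReal (a / (a - q)) * W ^ q * (F.card * m) ^ (1 - q / a) := by
        refine setLIntegral_enorm_rpow_le hf hq hqa hW hdist ?_
          (ENNReal.mul_ne_top (ENNReal.natCast_ne_top _) hm)
        calc μ (⋃ i ∈ F, s i) ≤ ∑ i ∈ F, μ (s i) := measure_biUnion_finset_le F s
          _ ≤ ∑ _i ∈ F, m := Finset.sum_le_sum fun i _ => hsm i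
          _ = F.card * m := by rw [Finset.sum_const, nsmul_eq_mul]
    _ = _ := by rw [ENNReal.mul_rpow_of_nonneg _ _ hθ₁]; ring

end WeakType

/-- For `p = ∞` the second factor is `x ^ 0 = 1`. -/
noncomputable def weakEmbeddingConst (q α p : ℝ≥0∞) : ℝ≥0∞ :=
  ENNReal.ofReal (α.toReal / (α.toReal - q.toReal)) ^ q⁻¹.toReal *
    ENNReal.ofReal (p.toReal / (p.toReal - α.toReal)) ^ p⁻¹.toReal

lemma weakEmbeddingConst_ne_top (q α p : ℝ≥0∞) : weakEmbeddingConst q α p ≠ ∞ :=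
  ENNReal.mul_ne_top (ENNReal.rpow_ne_top_of_nonneg toReal_nonneg ENNReal.ofReal_ne_top)
    (ENNReal.rpow_ne_top_of_nonneg toReal_nonneg ENNReal.ofReal_ne_top)

lemma weakEmbeddingConst_ne_zero {q α p : ℝ≥0∞} (hqα : q < α) (hαp : α < p) :
    weakEmbeddingConst q α p ≠ 0 := by
  have hqa : q.toReal < α.toReal := (ENNReal.toReal_lt_toReal hqα.ne_top hαp.ne_top).2 hqα
  refine mul_ne_zero (ENNReal.rpow_pos (ENNReal.ofReal_pos.2
    (div_pos (toReal_nonneg.trans_lt hqa) (sub_pos.2 hqa))) ENNReal.ofReal_ne_top).ne' ?_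
  rcases eq_or_ne p ∞ with rfl | hp
  · simp
  have hap : α.toReal < p.toReal := (ENNReal.toReal_lt_toReal hαp.ne_top hp).2 hαp
  exact (ENNReal.rpow_pos (ENNReal.ofReal_pos.2
    (div_pos (toReal_nonneg.trans_lt hap) (sub_pos.2 hap))) ENNReal.ofReal_ne_top).ne'

section PartNorm

variable {X E : Type*} [MeasurableSpace X] [NormedAddCommGroup E] {μ : Measure X} {f : X → E}
  {q α p W : ℝ≥0∞} {π : Set (Set X)}

lemma partNorm_le_of_encard_lt_le (hq : q ≠ 0) (hqα : q < α) (hαp : α < p)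
    (hmeas : ∀ A ∈ π, MeasurableSet A) {D : ℝ≥0∞} (hD : D ≠ ∞)
    (hsup : ∀ A ∈ π, ∫⁻ x in A, ‖f x‖ₑ ^ q.toReal ∂μ ≤ D)
    (hcount : ∀ t ≠ 0, ({A : π | t < ∫⁻ x in A, ‖f x‖ₑ ^ q.toReal ∂μ}.encard : ℝ≥0∞)
      ≤ (D / t) ^ (α.toReal / q.toReal)) :
    partNorm μ q p π f
      ≤ ENNReal.ofReal (p.toReal / (p.toReal - α.toReal)) ^ p⁻¹.toReal * D ^ q⁻¹.toReal := by
  have hqq : 0 < q.toReal := ENNReal.toReal_pos hq hqα.ne_top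
  have hqa : q.toReal < α.toReal := (ENNReal.toReal_lt_toReal hqα.ne_top hαp.ne_top).2 hqα
  have hnorm : ∀ A ∈ π,
      eLpNorm (A.indicator f) q μ = (∫⁻ x in A, ‖f x‖ₑ ^ q.toReal ∂μ) ^ q⁻¹.toReal := by
    intro A hA
    rw [eLpNorm_indicator_eq_eLpNorm_restrict (hmeas A hA),
      eLpNorm_eq_lintegral_rpow_enorm_toReal hq hqα.ne_top, one_div, ENNReal.toReal_inv]
  unfold partNorm
  split_ifs with hp
  · subst hp
    simp only [ENNReal.toReal_top, inv_top, ENNReal.toReal_zero, ENNReal.rpow_zero, one_mul]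
    exact iSup₂_le fun A hA =>
      (hnorm A hA).trans_le (ENNReal.rpow_le_rpow (hsup A hA) (by positivity))
  have hap : α.toReal < p.toReal := (ENNReal.toReal_lt_toReal hαp.ne_top hp).2 hαp
  have hpp : 0 < p.toReal := hqq.trans (hqa.trans hap)
  calc (∑' A : π, eLpNorm ((A : Set X).indicator f) q μ ^ p.toReal) ^ (1 / p.toReal)
      = (∑' A : π, (∫⁻ x in A, ‖f x‖ₑ ^ q.toReal ∂μ) ^ (p.toReal / q.toReal)) ^ (1 / p.toReal) := by
        congr 2; ext A
        rw [hnorm A A.2, ← ENNReal.rpow_mul, ENNReal.toReal_inv, inv_mul_eq_div]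
    _ ≤ (ENNReal.ofReal ((p.toReal / q.toReal) / (p.toReal / q.toReal - α.toReal / q.toReal))
          * D ^ (p.toReal / q.toReal)) ^ (1 / p.toReal) := by
        gcongr
        exact tsum_rpow_le_of_encard_lt_le hD (div_pos (hqq.trans hqa) hqq)
          (div_lt_div_of_pos_right hap hqq) (fun A => hsup A A.2) hcount
    _ = _ := by
        rw [ENNReal.mul_rpow_of_nonneg _ _ (by positivity), ← ENNReal.rpow_mul,
          ENNReal.toReal_inv, ENNReal.toReal_inv]
        congr 3 <;> field_simp

lemma partNorm_le_of_meas_lt_le (hf : AEStronglyMeasurable f μ) (hq : q ≠ 0) (hqα : q < α)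
    (hαp : α < p) (hW : W ≠ ∞) (hdist : ∀ s ≠ 0, μ {x | s < ‖f x‖ₑ} ≤ (W / s) ^ α.toReal)
    (hmeas : ∀ A ∈ π, MeasurableSet A) (hdisj : π.PairwiseDisjoint id)
    {m : ℝ≥0∞} (hm : m ≠ ∞) (hπm : ∀ A ∈ π, μ A ≤ m) :
    partNorm μ q p π f ≤ weakEmbeddingConst q α p * W * m ^ (q⁻¹.toReal - α⁻¹.toReal) := by
  have hqq : 0 < q.toReal := ENNReal.toReal_pos hq hqα.ne_top
  have hqa : q.toReal < α.toReal := (ENNReal.toReal_lt_toReal hqα.ne_top hαp.ne_top).2 hqα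
  have hθ : 0 ≤ 1 - q.toReal / α.toReal :=
    sub_nonneg.2 ((div_le_one (hqq.trans hqa)).2 hqa.le)
  refine (partNorm_le_of_encard_lt_le hq hqα hαp hmeas
    (ENNReal.mul_ne_top (ENNReal.mul_ne_top ENNReal.ofReal_ne_top
      (ENNReal.rpow_ne_top_of_nonneg hqq.le hW)) (ENNReal.rpow_ne_top_of_nonneg hθ hm))
    (fun A hA => setLIntegral_enorm_rpow_le hf hqq hqa hW hdist (hπm A hA) hm)
    (fun t ht => encard_lt_setLIntegral_le hf hqq hqa hW hdist (s := Subtype.val)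
      (fun A => hmeas A A.2) hdisj.subtype hm (fun A => hπm A A.2) ht)).trans_eq ?_
  rw [weakEmbeddingConst, ENNReal.mul_rpow_of_nonneg _ _ (by positivity),
    ENNReal.mul_rpow_of_nonneg _ _ (by positivity), ← ENNReal.rpow_mul, ← ENNReal.rpow_mul]
  simp only [ENNReal.toReal_inv]
  rw [mul_inv_cancel₀ hqq.ne', ENNReal.rpow_one,
    show (1 - q.toReal / α.toReal) * q.toReal⁻¹ = q.toReal⁻¹ - α.toReal⁻¹ by field_simp]
  ring

end PartNorm

section Group

variable {H : Type*} [Group H]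

lemma gball_mul_gball_subset_s18 {nm : H → ℝ} {γ r : ℝ} (hγ : 1 ≤ γ)
    (hmul : ∀ x y, nm (x * y) ≤ γ * (nm x + nm y)) (hr : 0 < r) :
    gball nm 1 (r / (4 * γ ^ 2)) * gball nm 1 (r / (4 * γ ^ 2)) ⊆ gball nm 1 r := by
  rintro _ ⟨x, hx, y, hy, rfl⟩
  simp only [gball, mem_ofPred_eq, inv_one, one_mul] at hx hy ⊢
  have hγ₀ : 0 < γ := one_pos.trans_le hγ
  calc nm (x * y) ≤ γ * (nm x + nm y) := hmul x y
    _ < γ * (r / (4 * γ ^ 2) + r / (4 * γ ^ 2)) := by gcongr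
    _ ≤ r := by
      rw [← sub_nonneg]
      field_simp
      nlinarith

lemma measure_le_of_isUniformPartition [MeasurableSpace H] [MeasurableMul H] {μ : Measure H}
    [μ.IsMulLeftInvariant] {π : Set (Set H)} {U V : Set H} (hπ : IsUniformPartition π U V)
    {A : Set H} (hA : A ∈ π) : μ A ≤ μ V := by
  obtain ⟨x, -, -, hAV⟩ := hπ.2.2.2.2 A hA
  exact (measure_mono hAV).trans_eq (measure_smul μ x V)

end Group

theorem statement18_general
    (μ : Measure G) [μ.IsHaarMeasure]
    (nm : G → ℝ) (γ ρ : ℝ)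
    (hγ : 1 ≤ γ)
    (hnm_mul : ∀ x y : G, nm (x * y) ≤ γ * (nm x + nm y))
    (hvol : ∀ r : ℝ, 0 < r → μ (gball nm 1 r) = ENNReal.ofReal (r ^ ρ))
    (πr : ℝ → Set (Set G))
    (hπr : ∀ r : ℝ, 0 < r → IsUniformPartition (πr r)
      (gball nm 1 (r / (4 * γ ^ 2)))
      (gball nm 1 (r / (4 * γ ^ 2)) * gball nm 1 (r / (4 * γ ^ 2))))
   (q p α : ℝ≥0∞) (hq1 : 1 ≤ q) (hqα : q < α) (hαp : α < p) :
    ∃ C : ℝ≥0, 0 < C ∧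
      (∀ f : G → ℂ, AEStronglyMeasurable f μ →
          alphaNorm μ nm πr q p α f ≤ (C : ℝ≥0∞) * weakNorm μ α f) ∧
        ∀ f : G → ℂ, AEStronglyMeasurable f μ →
          weakNorm μ α f < ∞ → alphaNorm μ nm πr q p α f < ∞ := by
  have hC₀ := weakEmbeddingConst_ne_zero hqα hαp
  have hC := weakEmbeddingConst_ne_top q α p
  have hbound : ∀ f : G → ℂ, AEStronglyMeasurable f μ →
      alphaNorm μ nm πr q p α f ≤ weakEmbeddingConst q α p * weakNorm μ α f := by
    intro f hf
    rcases eq_or_ne (weakNorm μ α f) ∞ with hW | hW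
    · simp [hW, ENNReal.mul_top hC₀]
    refine iSup₂_le fun r hr => ?_
    have hm₀ : μ (gball nm 1 r) ≠ 0 := by
      rw [hvol r hr]
      exact (ENNReal.ofReal_pos.2 (Real.rpow_pos_of_pos hr ρ)).ne'
    have hm : μ (gball nm 1 r) ≠ ∞ := by
      rw [hvol r hr]
      exact ENNReal.ofReal_ne_top
    have hpart := partNorm_le_of_meas_lt_le hf (zero_lt_one.trans_le hq1).ne' hqα hαp hW
      (fun s hs => meas_lt_enorm_le_weakNorm_div_rpow (pos_of_gt hqα).ne' hαp.ne_top f hs)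
      (hπr r hr).2.1 (hπr r hr).2.2.1 hm fun A hA =>
        (measure_le_of_isUniformPartition (hπr r hr) hA).trans
          (measure_mono (gball_mul_gball_subset_s18 hγ hnm_mul hr))
    calc _ ≤ μ (gball nm 1 r) ^ (α⁻¹.toReal - q⁻¹.toReal) * (weakEmbeddingConst q α p *
          weakNorm μ α f * μ (gball nm 1 r) ^ (q⁻¹.toReal - α⁻¹.toReal)) := by gcongr
      _ = weakEmbeddingConst q α p * weakNorm μ α f := by
        rw [mul_comm, mul_assoc, ← ENNReal.rpow_add _ _ hm₀ hm, sub_add_sub_cancel', sub_self,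
          ENNReal.rpow_zero, mul_one]
  refine ⟨(weakEmbeddingConst q α p).toNNReal, ENNReal.toNNReal_pos hC₀ hC, ?_, fun f hf hW => ?_⟩
  · simpa only [ENNReal.coe_toNNReal hC] using hbound
  · exact (hbound f hf).trans_lt (ENNReal.mul_lt_top hC.lt_top hW)

theorem statement18
    (μ : Measure G) [μ.IsHaarMeasure]
    (nm : G → ℝ) (γ ρ : ℝ)
    (hnm_cont : Continuous nm)
    (hnm_nonneg : ∀ x : G, 0 ≤ nm x)
    (hnm_zero : ∀ x : G, nm x = 0 ↔ x = 1)
    (hnm_inv : ∀ x : G, nm x⁻¹ = nm x)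
    (hγ : 1 ≤ γ)
    (hnm_mul : ∀ x y : G, nm (x * y) ≤ γ * (nm x + nm y))
    (hball_cpt : ∀ (x : G) (r : ℝ), 0 < r → IsCompact (closure (gball nm x r)))
    (hρ : 0 < ρ)
    (hvol : ∀ r : ℝ, 0 < r → μ (gball nm 1 r) = ENNReal.ofReal (r ^ ρ))
    (πr : ℝ → Set (Set G))
    (hπr : ∀ r : ℝ, 0 < r → IsUniformPartition (πr r)
      (gball nm 1 (r / (4 * γ ^ 2)))
      (gball nm 1 (r / (4 * γ ^ 2)) * gball nm 1 (r / (4 * γ ^ 2))))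
   (q p α : ℝ≥0∞) (hq1 : 1 ≤ q) (hqα : q < α) (hαp : α < p) :
    ∃ C : ℝ≥0, 0 < C ∧
      (∀ f : G → ℂ, AEStronglyMeasurable f μ →
          alphaNorm μ nm πr q p α f ≤ (C : ℝ≥0∞) * weakNorm μ α f) ∧
        ∀ f : G → ℂ, AEStronglyMeasurable f μ →
          weakNorm μ α f < ∞ → alphaNorm μ nm πr q p α f < ∞ :=
  statement18_general μ nm γ ρ hγ hnm_mul hvol πr hπr q p α hq1 hqα hαp
end
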